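/- arXiv:2507.21883 — 9 statements merged into one kernel-verified Lean document; each statement's English description precedes it below -/
import Mathlib

section
/- For all x ∈ [-1,1], 2 arccos x ≥ 0.878 · π · (1 - x). -/
set_option maxHeartbeats 1000000


open Real

private lemma mono_aux {f f' : ℝ → ℝ} (hf : ∀ y, HasDerivAt f (f' y) y)
    (hge : ∀ y, 0 ≤ y → 0 ≤ f' y) {x : ℝ} (hx : 0 ≤ x) : f 0 ≤ f x := by
  have hm : MonotoneOn f (Set.Ici 0) := by
    apply monotoneOn_of_deriv_nonneg (convex_Ici 0)
      (fun y _ => (hf y).continuousAt.continuousWithinAt)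
      (fun y _ => ((hf y).differentiableAt).differentiableWithinAt)
    intro y hy
    rw [interior_Ici] at hy
    rw [(hf y).deriv]
    exact hge y (le_of_lt hy)
  exact hm Set.self_mem_Ici hx hx

private lemma sin_ge3 {x : ℝ} (hx : 0 ≤ x) : x - x^3/6 ≤ sin x := by
  have h := mono_aux (f := fun t => sin t - (t - t^3/6)) (f' := fun t => cos t - (1 - t^2/2))
    (fun y => by
      have : HasDerivAt (fun t : ℝ => sin t - (t - t^3/6)) (cos y - (1 - 3*y^2/6)) y :=
        (Real.hasDerivAt_sin y).sub ((hasDerivAt_id y).sub ((hasDerivAt_pow 3 y).div_const 6))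
      convert this using 1; ring)
    (fun y _ => by nlinarith [Real.one_sub_sq_div_two_le_cos (x := y)]) hx
  simp at h; linarith

private lemma cos_le4 {x : ℝ} (hx : 0 ≤ x) : cos x ≤ 1 - x^2/2 + x^4/24 := by
  have h := mono_aux (f := fun t => (1 - t^2/2 + t^4/24) - cos t)
    (f' := fun t => sin t - (t - t^3/6))
    (fun y => by
      have : HasDerivAt (fun t : ℝ => (1 - t^2/2 + t^4/24) - cos t)
          ((0 - 2*y^1/2 + 4*y^3/24) - (-sin y)) y :=
        (((hasDerivAt_const y (1:ℝ)).sub ((hasDerivAt_pow 2 y).div_const 2)).add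
          ((hasDerivAt_pow 4 y).div_const 24)).sub (Real.hasDerivAt_cos y)
      convert this using 1; ring)
    (fun y hy => by linarith [sin_ge3 hy]) hx
  simp at h; linarith

private lemma sin_le5 {x : ℝ} (hx : 0 ≤ x) : sin x ≤ x - x^3/6 + x^5/120 := by
  have h := mono_aux (f := fun t => (t - t^3/6 + t^5/120) - sin t)
    (f' := fun t => (1 - t^2/2 + t^4/24) - cos t)
    (fun y => by
      have : HasDerivAt (fun t : ℝ => (t - t^3/6 + t^5/120) - sin t)
          ((1 - 3*y^2/6 + 5*y^4/120) - cos y) y :=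
        (((hasDerivAt_id y).sub ((hasDerivAt_pow 3 y).div_const 6)).add
          ((hasDerivAt_pow 5 y).div_const 120)).sub (Real.hasDerivAt_sin y)
      convert this using 1; ring)
    (fun y hy => by linarith [cos_le4 hy]) hx
  simp at h; linarith

private lemma cos_ge6 {x : ℝ} (hx : 0 ≤ x) : 1 - x^2/2 + x^4/24 - x^6/720 ≤ cos x := by
  have h := mono_aux (f := fun t => cos t - (1 - t^2/2 + t^4/24 - t^6/720))
    (f' := fun t => (t - t^3/6 + t^5/120) - sin t)
    (fun y => by
      have : HasDerivAt (fun t : ℝ => cos t - (1 - t^2/2 + t^4/24 - t^6/720))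
          ((-sin y) - (0 - 2*y^1/2 + 4*y^3/24 - 6*y^5/720)) y :=
        (Real.hasDerivAt_cos y).sub
          ((((hasDerivAt_const y (1:ℝ)).sub ((hasDerivAt_pow 2 y).div_const 2)).add
            ((hasDerivAt_pow 4 y).div_const 24)).sub ((hasDerivAt_pow 6 y).div_const 720))
      convert this using 1; ring)
    (fun y hy => by linarith [sin_le5 hy]) hx
  simp at h; linarith

private lemma sin_ge7 {x : ℝ} (hx : 0 ≤ x) : x - x^3/6 + x^5/120 - x^7/5040 ≤ sin x := by
  have h := mono_aux (f := fun t => sin t - (t - t^3/6 + t^5/120 - t^7/5040))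
    (f' := fun t => cos t - (1 - t^2/2 + t^4/24 - t^6/720))
    (fun y => by
      have : HasDerivAt (fun t : ℝ => sin t - (t - t^3/6 + t^5/120 - t^7/5040))
          (cos y - (1 - 3*y^2/6 + 5*y^4/120 - 7*y^6/5040)) y :=
        (Real.hasDerivAt_sin y).sub
          ((((hasDerivAt_id y).sub ((hasDerivAt_pow 3 y).div_const 6)).add
            ((hasDerivAt_pow 5 y).div_const 120)).sub ((hasDerivAt_pow 7 y).div_const 5040))
      convert this using 1; ring)
    (fun y hy => by linarith [cos_ge6 hy]) hx
  simp at h; linarith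

private lemma cos_le8 {x : ℝ} (hx : 0 ≤ x) :
    cos x ≤ 1 - x^2/2 + x^4/24 - x^6/720 + x^8/40320 := by
  have h := mono_aux (f := fun t => (1 - t^2/2 + t^4/24 - t^6/720 + t^8/40320) - cos t)
    (f' := fun t => sin t - (t - t^3/6 + t^5/120 - t^7/5040))
    (fun y => by
      have : HasDerivAt (fun t : ℝ => (1 - t^2/2 + t^4/24 - t^6/720 + t^8/40320) - cos t)
          ((0 - 2*y^1/2 + 4*y^3/24 - 6*y^5/720 + 8*y^7/40320) - (-sin y)) y :=
        (((((hasDerivAt_const y (1:ℝ)).sub ((hasDerivAt_pow 2 y).div_const 2)).add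
          ((hasDerivAt_pow 4 y).div_const 24)).sub ((hasDerivAt_pow 6 y).div_const 720)).add
          ((hasDerivAt_pow 8 y).div_const 40320)).sub (Real.hasDerivAt_cos y)
      convert this using 1; ring)
    (fun y hy => by linarith [sin_ge7 hy]) hx
  simp at h; linarith

private lemma sin_le9 {x : ℝ} (hx : 0 ≤ x) :
    sin x ≤ x - x^3/6 + x^5/120 - x^7/5040 + x^9/362880 := by
  have h := mono_aux (f := fun t => (t - t^3/6 + t^5/120 - t^7/5040 + t^9/362880) - sin t)
    (f' := fun t => (1 - t^2/2 + t^4/24 - t^6/720 + t^8/40320) - cos t)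
    (fun y => by
      have : HasDerivAt (fun t : ℝ => (t - t^3/6 + t^5/120 - t^7/5040 + t^9/362880) - sin t)
          ((1 - 3*y^2/6 + 5*y^4/120 - 7*y^6/5040 + 9*y^8/362880) - cos y) y :=
        (((((hasDerivAt_id y).sub ((hasDerivAt_pow 3 y).div_const 6)).add
          ((hasDerivAt_pow 5 y).div_const 120)).sub ((hasDerivAt_pow 7 y).div_const 5040)).add
          ((hasDerivAt_pow 9 y).div_const 362880)).sub (Real.hasDerivAt_sin y)
      convert this using 1; ring)
    (fun y hy => by linarith [cos_le8 hy]) hx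
  simp at h; linarith

private lemma sin_tangent {t θ : ℝ} (ht0 : 0 ≤ t) (htp : t ≤ π) (hθ0 : 0 ≤ θ) (hθp : θ ≤ π) :
    sin θ ≤ sin t + cos t * (θ - t) := by
  rcases lt_trichotomy θ t with h | h | h
  · obtain ⟨c, hc, hc'⟩ := exists_hasDerivAt_eq_slope sin cos h
      (Real.continuous_sin.continuousOn) (fun y _ => Real.hasDerivAt_sin y)
    have hcc : cos t < cos c :=
      Real.strictAntiOn_cos ⟨by linarith [hc.1], by linarith [hc.2]⟩ ⟨ht0, htp⟩ hc.2
    rw [eq_div_iff (by intro he; nlinarith [hc.1, hc.2] : t - θ ≠ 0)] at hc'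
    nlinarith
  · simp [h]
  · obtain ⟨c, hc, hc'⟩ := exists_hasDerivAt_eq_slope sin cos h
      (Real.continuous_sin.continuousOn) (fun y _ => Real.hasDerivAt_sin y)
    have hcc : cos c < cos t :=
      Real.strictAntiOn_cos ⟨ht0, htp⟩ ⟨by linarith [hc.1], by linarith [hc.2]⟩ hc.1
    rw [eq_div_iff (by intro he; nlinarith [hc.1, hc.2] : θ - t ≠ 0)] at hc'
    nlinarith

private lemma cos_tangent {t θ : ℝ} (ht0 : π/2 ≤ t) (htp : t ≤ 3*π/2)
    (hθ0 : π/2 ≤ θ) (hθp : θ ≤ 3*π/2) :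
    cos t - sin t * (θ - t) ≤ cos θ := by
  have h := sin_tangent (t := t - π/2) (θ := θ - π/2)
    (by linarith) (by linarith) (by linarith) (by linarith)
  have e1 : sin (θ - π/2) = -cos θ := by
    rw [show θ - π/2 = -(π/2 - θ) by ring, Real.sin_neg, Real.sin_pi_div_two_sub]
  have e2 : sin (t - π/2) = -cos t := by
    rw [show t - π/2 = -(π/2 - t) by ring, Real.sin_neg, Real.sin_pi_div_two_sub]
  have e3 : cos (t - π/2) = sin t := by
    rw [show t - π/2 = -(π/2 - t) by ring, Real.cos_neg, Real.cos_pi_div_two_sub]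
  rw [e1, e2, e3] at h
  linarith

private lemma sin98_lo : (0.9022597 : ℝ) ≤ sin (9/8) := by
  have h := sin_ge7 (show (0:ℝ) ≤ 9/8 by norm_num)
  norm_num at h ⊢
  linarith

private lemma sin98_hi : sin (9/8 : ℝ) ≤ 0.9022677 := by
  have h := sin_le9 (show (0:ℝ) ≤ 9/8 by norm_num)
  norm_num at h ⊢
  linarith

private lemma cos98_lo : (0.4311137 : ℝ) ≤ cos (9/8) := by
  have h := cos_ge6 (show (0:ℝ) ≤ 9/8 by norm_num)
  norm_num at h ⊢
  linarith

private lemma cos98_hi : cos (9/8 : ℝ) ≤ 0.4311775 := by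
  have h := cos_le8 (show (0:ℝ) ≤ 9/8 by norm_num)
  norm_num at h ⊢
  linarith

private lemma cos94_lo : (-0.6281742 : ℝ) ≤ cos (9/4) := by
  have h : cos (9/4 : ℝ) = 1 - 2 * sin (9/8) ^ 2 := by
    have h2 : (9/4 : ℝ) = 2 * (9/8) := by norm_num
    rw [h2, Real.cos_two_mul]
    nlinarith [Real.sin_sq_add_cos_sq (9/8 : ℝ)]
  rw [h]
  nlinarith [sin98_lo, sin98_hi, Real.sin_nonneg_of_nonneg_of_le_pi
    (show (0:ℝ) ≤ 9/8 by norm_num) (by linarith [Real.pi_gt_d6] : (9/8:ℝ) ≤ π)]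

private lemma sin94_lo : (0.7779530 : ℝ) ≤ sin (9/4) := by
  have h : sin (9/4 : ℝ) = 2 * sin (9/8) * cos (9/8) := by
    have h2 : (9/4 : ℝ) = 2 * (9/8) := by norm_num
    rw [h2, Real.sin_two_mul]
  rw [h]
  nlinarith [sin98_lo, sin98_hi, cos98_lo, cos98_hi]

private lemma sin94_hi : sin (9/4 : ℝ) ≤ 0.7780751 := by
  have h : sin (9/4 : ℝ) = 2 * sin (9/8) * cos (9/8) := by
    have h2 : (9/4 : ℝ) = 2 * (9/8) := by norm_num
    rw [h2, Real.sin_two_mul]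
  rw [h]
  nlinarith [sin98_lo, sin98_hi, cos98_lo, cos98_hi]

private lemma key (θ : ℝ) (h0 : 0 ≤ θ) (hp : θ ≤ π) :
    0.878 * (π * (1 - cos θ)) ≤ 2 * θ := by
  have hπ1 : (3.141592 : ℝ) ≤ π := le_of_lt Real.pi_gt_d6
  have hπ2 : π ≤ (3.141593 : ℝ) := le_of_lt Real.pi_lt_d6
  rcases le_or_gt θ 1.62 with hA | hA
  · -- Region A : [0, 1.62]
    set t := θ / 2 with htdef
    have ht0 : 0 ≤ t := by positivity
    have ht81 : t ≤ 0.81 := by rw [htdef]; linarith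
    have hcs : cos θ = 1 - 2 * sin t ^ 2 := by
      rw [show θ = 2 * t by rw [htdef]; ring, Real.cos_two_mul]
      nlinarith [Real.sin_sq_add_cos_sq t]
    have hs0 : 0 ≤ sin t := Real.sin_nonneg_of_nonneg_of_le_pi ht0 (by linarith)
    have hst : sin t ≤ t := Real.sin_le ht0
    have hP : sin t ≤ 0.7243322 := by
      have h5 := sin_le5 ht0
      nlinarith [sq_nonneg t, sq_nonneg (t - 0.81), mul_nonneg (sub_nonneg.2 ht81) ht0,
        mul_nonneg (mul_nonneg (sub_nonneg.2 ht81) ht0) ht0,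
        mul_nonneg (mul_nonneg (mul_nonneg (sub_nonneg.2 ht81) ht0) ht0) ht0,
        mul_nonneg (mul_nonneg (mul_nonneg (mul_nonneg (sub_nonneg.2 ht81) ht0) ht0) ht0) ht0]
    rw [hcs]
    have hgoal : θ = 2 * t := by rw [htdef]; ring
    rw [hgoal]
    nlinarith [mul_nonneg (sub_nonneg.2 hst) hs0,
      mul_nonneg (mul_nonneg ht0 hs0) (sub_nonneg.2 hπ2),
      mul_nonneg (mul_nonneg (le_of_lt Real.pi_pos) ht0) (sub_nonneg.2 hP),
      mul_nonneg (sub_nonneg.2 hπ2) ht0,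
      mul_nonneg (mul_nonneg ht0 ht0) (sub_nonneg.2 hπ2)]
  · rcases le_or_gt θ 2.22 with hB | hB
    · -- Region B : [1.62, 2.22], tangent at 2π/3
      have h3a : (1.7320508 : ℝ) ≤ Real.sqrt 3 := by
        nlinarith [Real.sq_sqrt (show (0:ℝ) ≤ 3 by norm_num), Real.sqrt_nonneg 3]
      have h3b : Real.sqrt 3 ≤ (1.7320509 : ℝ) := by
        nlinarith [Real.sq_sqrt (show (0:ℝ) ≤ 3 by norm_num), Real.sqrt_nonneg 3]
      have hc23 : cos (2*π/3) = -(1/2) := by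
        rw [show 2*π/3 = π - π/3 by ring, Real.cos_pi_sub, Real.cos_pi_div_three]
      have hs23 : sin (2*π/3) = Real.sqrt 3 / 2 := by
        rw [show 2*π/3 = π - π/3 by ring, Real.sin_pi_sub, Real.sin_pi_div_three]
      have htan := cos_tangent (t := 2*π/3) (θ := θ)
        (by linarith) (by linarith) (by linarith) (by linarith)
      rw [hc23, hs23] at htan
      nlinarith [mul_nonneg (sub_nonneg.2 hπ1) (sub_nonneg.2 h3a),
        mul_nonneg (sub_nonneg.2 hπ2) (sub_nonneg.2 h3b),
        mul_nonneg (sub_nonneg.2 hA.le) (sub_nonneg.2 h3a),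
        mul_nonneg (sub_nonneg.2 hB) (sub_nonneg.2 hπ1),
        mul_nonneg (mul_nonneg (sub_nonneg.2 hB) (sub_nonneg.2 hπ1)) (sub_nonneg.2 h3a),
        mul_nonneg (mul_nonneg (sub_nonneg.2 hA.le) (sub_nonneg.2 hπ2)) (sub_nonneg.2 h3b)]
    · rcases le_or_gt θ 2.295 with hC | hC
      · -- Region C : [2.22, 2.295], tangent at 9/4
        have htan := cos_tangent (t := (9/4 : ℝ)) (θ := θ)
          (by linarith) (by linarith) (by linarith) (by linarith)
        nlinarith [cos94_lo, sin94_lo, sin94_hi,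
          mul_nonneg (sub_nonneg.2 hB.le) (sub_nonneg.2 hπ1),
          mul_nonneg (sub_nonneg.2 hC) (sub_nonneg.2 hπ2),
          mul_nonneg (mul_nonneg (sub_nonneg.2 hC) (sub_nonneg.2 hπ2))
            (sub_nonneg.2 sin94_hi),
          mul_nonneg (mul_nonneg (sub_nonneg.2 hB.le) (sub_nonneg.2 hπ1))
            (sub_nonneg.2 sin94_lo),
          mul_nonneg (sub_nonneg.2 sin94_lo) (sub_nonneg.2 hπ1),
          mul_nonneg (sub_nonneg.2 sin94_hi) (sub_nonneg.2 hπ2)]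
      · rcases le_or_gt θ 2.76 with hD | hD
        · -- Region D : [2.295, 2.76], tangent at 3π/4
          have h2a : (1.41421356 : ℝ) ≤ Real.sqrt 2 := by
            nlinarith [Real.sq_sqrt (show (0:ℝ) ≤ 2 by norm_num), Real.sqrt_nonneg 2]
          have h2b : Real.sqrt 2 ≤ (1.41421357 : ℝ) := by
            nlinarith [Real.sq_sqrt (show (0:ℝ) ≤ 2 by norm_num), Real.sqrt_nonneg 2]
          have hc34 : cos (3*π/4) = -(Real.sqrt 2 / 2) := by
            rw [show 3*π/4 = π - π/4 by ring, Real.cos_pi_sub, Real.cos_pi_div_four]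
          have hs34 : sin (3*π/4) = Real.sqrt 2 / 2 := by
            rw [show 3*π/4 = π - π/4 by ring, Real.sin_pi_sub, Real.sin_pi_div_four]
          have htan := cos_tangent (t := 3*π/4) (θ := θ)
            (by linarith) (by linarith) (by linarith) (by linarith)
          rw [hc34, hs34] at htan
          nlinarith [mul_nonneg (sub_nonneg.2 hπ1) (sub_nonneg.2 h2a),
            mul_nonneg (sub_nonneg.2 hπ2) (sub_nonneg.2 h2b),
            mul_nonneg (sub_nonneg.2 hC.le) (sub_nonneg.2 hπ1),
            mul_nonneg (sub_nonneg.2 hD) (sub_nonneg.2 hπ2),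
            mul_nonneg (mul_nonneg (sub_nonneg.2 hD) (sub_nonneg.2 hπ2)) (sub_nonneg.2 h2b),
            mul_nonneg (mul_nonneg (sub_nonneg.2 hC.le) (sub_nonneg.2 hπ1)) (sub_nonneg.2 h2a)]
        · -- Region E : [2.76, π]
          nlinarith [Real.neg_one_le_cos θ, Real.cos_le_one θ, Real.pi_pos]

/-- For all `x ∈ [-1, 1]`, `2 * arccos x ≥ 0.878 * (π * (1 - x))`,
i.e. the Goemans–Williamson ratio `2 arccos x / (π (1 - x))` is at least `0.878`. -/
theorem stmt_0 :
    ∀ x ∈ Set.Icc (-1 : ℝ) 1, 0.878 * (π * (1 - x)) ≤ 2 * arccos x := by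
  intro x hx
  have h2 := key (arccos x) (Real.arccos_nonneg x) (Real.arccos_le_pi x)
  rw [Real.cos_arccos hx.1 hx.2] at h2
  exact h2
end

section
/- The function g(x) = 2 arccos(x)/(π(1 - x)) is monotonically (strictly) increasing on the interval [-0.68, 1). -/
/-!
The derivative of `g` has the sign of `arccos x - √((1 - x) / (1 + x))`, so it suffices to show
`√u < arccos x` for `u = (1 - x) / (1 + x)`, i.e. `x < cos √u` with `x = (1 - u) / (1 + u)`.
The bound `x ≥ -0.68` is exactly `u ≤ 21/4`, and on `(0, 21/4]` the degree-six Taylor lower bound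
of `cos` already exceeds `(1 - u) / (1 + u)`.
-/

open Real

theorem le_of_hasDerivAt_le_of_le {f g f' g' : ℝ → ℝ} {a b : ℝ}
    (hf : ∀ t, HasDerivAt f (f' t) t) (hg : ∀ t, HasDerivAt g (g' t) t)
    (ha : f a ≤ g a) (h' : ∀ t, a ≤ t → f' t ≤ g' t) (hab : a ≤ b) : f b ≤ g b :=
  image_le_of_deriv_right_le_deriv_boundary
    (fun t _ => (hf t).continuousAt.continuousWithinAt) (fun t _ => (hf t).hasDerivWithinAt) ha
    (fun t _ => (hg t).continuousAt.continuousWithinAt) (fun t _ => (hg t).hasDerivWithinAt)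
    (fun t ht => h' t ht.1) ⟨hab, le_rfl⟩

namespace Real

theorem cos_le_taylor_four {t : ℝ} (ht : 0 ≤ t) : cos t ≤ 1 - t ^ 2 / 2 + t ^ 4 / 24 :=
  le_of_hasDerivAt_le_of_le (f' := fun t => -sin t) (g' := fun t => -t + t ^ 3 / 6)
    hasDerivAt_cos
    (fun t => by
      refine ((((hasDerivAt_pow 2 t).div_const 2).const_sub 1).add
        ((hasDerivAt_pow 4 t).div_const 24)).congr_deriv ?_
      push_cast; ring)
    (by simp) (fun s hs => by linarith [sin_ge_sub_cube hs]) ht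

theorem sin_le_taylor_five {t : ℝ} (ht : 0 ≤ t) : sin t ≤ t - t ^ 3 / 6 + t ^ 5 / 120 :=
  le_of_hasDerivAt_le_of_le (f' := cos) (g' := fun t => 1 - t ^ 2 / 2 + t ^ 4 / 24)
    hasDerivAt_sin
    (fun t => by
      refine (((hasDerivAt_id t).sub ((hasDerivAt_pow 3 t).div_const 6)).add
        ((hasDerivAt_pow 5 t).div_const 120)).congr_deriv ?_
      push_cast; ring)
    (by simp) (fun s hs => cos_le_taylor_four hs) ht

theorem taylor_six_le_cos {t : ℝ} (ht : 0 ≤ t) :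
    1 - t ^ 2 / 2 + t ^ 4 / 24 - t ^ 6 / 720 ≤ cos t :=
  le_of_hasDerivAt_le_of_le (f' := fun t => -t + t ^ 3 / 6 - t ^ 5 / 120) (g' := fun t => -sin t)
    (fun t => by
      refine (((((hasDerivAt_pow 2 t).div_const 2).const_sub 1).add
        ((hasDerivAt_pow 4 t).div_const 24)).sub
          ((hasDerivAt_pow 6 t).div_const 720)).congr_deriv ?_
      push_cast; ring)
    hasDerivAt_cos (by simp) (fun s hs => by linarith [sin_le_taylor_five hs]) ht

theorem one_sub_div_one_add_lt_cos_sqrt {u : ℝ} (hu₀ : 0 < u) (hu : u ≤ 21 / 4) :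
    (1 - u) / (1 + u) < cos √u := by
  have hsq : √u ^ 2 = u := sq_sqrt hu₀.le
  calc (1 - u) / (1 + u) < 1 - u / 2 + u ^ 2 / 24 - u ^ 3 / 720 := by
        rw [div_lt_iff₀ (by positivity)]
        -- Cleared of denominators this is `0 < u (1080 - 330 u + 29 u² - u³)`; subtracting
        -- `(21/4 - u) (u - 95/8)²` from the cubic leaves a linear term positive on `[0, 21/4]`.
        nlinarith [mul_nonneg hu₀.le (mul_nonneg (sub_nonneg.2 hu) (sq_nonneg (u - 95 / 8)))]
    _ = 1 - √u ^ 2 / 2 + √u ^ 4 / 24 - √u ^ 6 / 720 := by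
        rw [show √u ^ 4 = (√u ^ 2) ^ 2 by ring, show √u ^ 6 = (√u ^ 2) ^ 3 by ring, hsq]
    _ ≤ cos √u := taylor_six_le_cos (sqrt_nonneg u)

theorem sqrt_one_sub_div_one_add_lt_arccos {x : ℝ} (hx₀ : -0.68 ≤ x) (hx₁ : x < 1) :
    √((1 - x) / (1 + x)) < arccos x := by
  set u := (1 - x) / (1 + x) with hu
  have hx : 0 < 1 + x := by linarith
  have hu₀ : 0 < u := div_pos (by linarith) hx
  have hu₁ : u ≤ 21 / 4 := by rw [div_le_iff₀ hx]; linarith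
  have hxu : x = (1 - u) / (1 + u) := by rw [hu]; field_simp; ring
  have hsqrt_le_pi : √u ≤ π := by nlinarith [pi_gt_three, sq_sqrt hu₀.le, sqrt_nonneg u]
  calc √u = arccos (cos √u) := (arccos_cos (sqrt_nonneg u) hsqrt_le_pi).symm
    _ < arccos x := arccos_lt_arccos (by linarith)
        (hxu ▸ one_sub_div_one_add_lt_cos_sqrt hu₀ hu₁) (cos_le_one _)

theorem one_sub_div_sqrt_one_sub_sq {x : ℝ} (hx₀ : -1 < x) (hx₁ : x < 1) :
    (1 - x) / √(1 - x ^ 2) = √((1 - x) / (1 + x)) := by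
  rw [show 1 - x ^ 2 = (1 - x) * (1 + x) by ring, sqrt_div' _ (by linarith : 0 ≤ 1 + x),
    sqrt_mul (by linarith : 0 ≤ 1 - x)]
  have hsq := sq_sqrt (by linarith : 0 ≤ 1 - x)
  have : 0 < √(1 - x) := sqrt_pos.2 (by linarith)
  have : 0 < √(1 + x) := sqrt_pos.2 (by linarith)
  field_simp
  linarith

theorem hasDerivAt_arccos_div_one_sub {x : ℝ} (hx₀ : -1 < x) (hx₁ : x < 1) :
    HasDerivAt (fun x => 2 * arccos x / (π * (1 - x)))
      (2 * (arccos x - √((1 - x) / (1 + x))) / (π * (1 - x) ^ 2)) x := by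
  have h1x : 1 - x ≠ 0 := by linarith
  refine (((hasDerivAt_arccos hx₀.ne' hx₁.ne).const_mul 2).div
    (((hasDerivAt_id' x).const_sub 1).const_mul π) (by positivity)).congr_deriv ?_
  rw [← one_sub_div_sqrt_one_sub_sq hx₀ hx₁]
  have : 0 < √(1 - x ^ 2) := sqrt_pos.2 (by nlinarith)
  field_simp
  ring

end Real

/-- The function `g(x) = 2 arccos x / (π (1 - x))` is strictly increasing on `[-0.68, 1)`. -/
theorem stmt_1 :
    StrictMonoOn (fun x : ℝ => 2 * arccos x / (π * (1 - x)))
      (Set.Ico (-0.68 : ℝ) 1) := by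
  refine strictMonoOn_of_deriv_pos (convex_Ico _ _) ?_ fun x hx => ?_
  · exact ContinuousOn.div (by fun_prop) (by fun_prop)
      fun x hx => mul_ne_zero pi_ne_zero (by linarith [hx.2])
  rw [interior_Ico] at hx
  rw [(hasDerivAt_arccos_div_one_sub (by linarith [hx.1]) hx.2).deriv]
  have hx₁ : 1 - x ≠ 0 := by linarith [hx.2]
  have hpos := sub_pos.2 (sqrt_one_sub_div_one_add_lt_arccos hx.1.le hx.2)
  positivity
end

section
/- For every ε with 0 ≤ ε ≤ 0.689 and every x with |x| ≤ ε and x < 1, one has 2 arccos(x)/(π(1 - x)) ≥ 2 arccos(-ε)/(π(1 + ε)). -/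
/-!
Writing `θ = arccos x`, the derivative of `arccos x / (1 - x)` has the sign of
`θ sin θ - (1 - cos θ)`. The function `ψ θ = θ sin θ + cos θ` has derivative `θ cos θ`, so it
increases on `[0, π/2]` and decreases on `[π/2, π]`; hence `ψ ≥ ψ 0 = 1` on `[0, θ₀]` for
`θ₀ = arccos (-0.689)` as soon as `ψ θ₀ ≥ 1`. That last numerical fact reduces to
`arcsin 0.689 ≥ 0.7597`, i.e. to the fifth-order Taylor bound `sin t ≤ t - t³/6 + t⁵/120`.
-/

open Real Set

lemma cos_le_one_sub_sq_div_two_add_pow_four_div (x : ℝ) :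
    cos x ≤ 1 - x ^ 2 / 2 + x ^ 4 / 24 := by
  suffices h : ∀ t, 0 ≤ t → cos t ≤ 1 - t ^ 2 / 2 + t ^ 4 / 24 by
    have := h |x| (abs_nonneg x)
    rwa [cos_abs, sq_abs, Even.pow_abs (by decide)] at this
  intro t ht
  have hmono : MonotoneOn (fun s => 1 - s ^ 2 / 2 + s ^ 4 / 24 - cos s) (Ici 0) := by
    refine monotoneOn_of_hasDerivWithinAt_nonneg (f' := fun s => -s + s ^ 3 / 6 + sin s)
      (convex_Ici 0) (by fun_prop) (fun s _ => ?_) (fun s hs => ?_)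
    · exact ((((hasDerivAt_pow 2 s).div_const 2).const_sub 1).add
        ((hasDerivAt_pow 4 s).div_const 24)).sub (hasDerivAt_cos s)
        |>.congr_deriv (by norm_num; ring) |>.hasDerivWithinAt
    · rw [interior_Ici] at hs
      linarith [sin_ge_sub_cube (le_of_lt hs)]
  simpa using hmono self_mem_Ici ht ht

lemma sin_le_sub_cube_add_pow_five_div {x : ℝ} (hx : 0 ≤ x) :
    sin x ≤ x - x ^ 3 / 6 + x ^ 5 / 120 := by
  have hmono : MonotoneOn (fun s => s - s ^ 3 / 6 + s ^ 5 / 120 - sin s) (Ici 0) := by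
    refine monotoneOn_of_hasDerivWithinAt_nonneg
      (f' := fun s => 1 - s ^ 2 / 2 + s ^ 4 / 24 - cos s) (convex_Ici 0)
      (by fun_prop) (fun s _ => ?_) (fun s _ => ?_)
    · exact (((hasDerivAt_id s).sub ((hasDerivAt_pow 3 s).div_const 6)).add
        ((hasDerivAt_pow 5 s).div_const 120)).sub (hasDerivAt_sin s)
        |>.congr_deriv (by norm_num; ring) |>.hasDerivWithinAt
    · linarith [cos_le_one_sub_sq_div_two_add_pow_four_div s]
  simpa using hmono self_mem_Ici hx hx

lemma le_arcsin_689 : 0.7597 ≤ arcsin 0.689 := by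
  rw [le_arcsin_iff_sin_le
    ⟨by norm_num; linarith [pi_gt_three], by norm_num; linarith [pi_gt_three]⟩
    ⟨by norm_num, by norm_num⟩]
  calc sin 0.7597 ≤ 0.7597 - 0.7597 ^ 3 / 6 + 0.7597 ^ 5 / 120 :=
        sin_le_sub_cube_add_pow_five_div (by norm_num)
    _ ≤ 0.689 := by norm_num

lemma hasDerivAt_mul_sin_add_cos (t : ℝ) :
    HasDerivAt (fun s => s * sin s + cos s) (t * cos t) t :=
  ((hasDerivAt_id t).mul (hasDerivAt_sin t)).add (hasDerivAt_cos t) |>.congr_deriv (by simp)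

lemma monotoneOn_mul_sin_add_cos : MonotoneOn (fun s => s * sin s + cos s) (Icc 0 (π / 2)) :=
  monotoneOn_of_hasDerivWithinAt_nonneg (f' := fun t => t * cos t) (convex_Icc _ _) (by fun_prop)
    (fun t _ => (hasDerivAt_mul_sin_add_cos t).hasDerivWithinAt) fun t ht => by
      rw [interior_Icc] at ht
      exact mul_nonneg ht.1.le (cos_nonneg_of_mem_Icc ⟨by linarith [pi_pos, ht.1], ht.2.le⟩)

lemma antitoneOn_mul_sin_add_cos : AntitoneOn (fun s => s * sin s + cos s) (Icc (π / 2) π) :=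
  antitoneOn_of_hasDerivWithinAt_nonpos (f' := fun t => t * cos t) (convex_Icc _ _) (by fun_prop)
    (fun t _ => (hasDerivAt_mul_sin_add_cos t).hasDerivWithinAt) fun t ht => by
      rw [interior_Icc] at ht
      exact mul_nonpos_of_nonneg_of_nonpos (by linarith [pi_pos, ht.1])
        (cos_nonpos_of_pi_div_two_le_of_le ht.1.le (by linarith [pi_pos, ht.2]))

lemma one_le_mul_sin_add_cos_arccos :
    1 ≤ arccos (-0.689) * sin (arccos (-0.689)) + cos (arccos (-0.689)) := by
  have hθ : 2.330496 ≤ arccos (-0.689) := by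
    rw [arccos_eq_pi_div_two_sub_arcsin, arcsin_neg]
    linarith [pi_gt_d6, le_arcsin_689]
  have hs : 0.72475 ≤ √(1 - (-0.689) ^ 2) := le_sqrt_of_sq_le (by norm_num)
  rw [sin_arccos, cos_arccos (by norm_num) (by norm_num)]
  -- tight: `2.330496 * 0.72475 ≈ 1.68903`, against `1 + 0.689`
  nlinarith

lemma one_sub_cos_le_mul_sin {θ : ℝ} (h0 : 0 ≤ θ) (hπ : θ ≤ π) (hcos : -0.689 ≤ cos θ) :
    1 - cos θ ≤ θ * sin θ := by
  suffices 1 ≤ θ * sin θ + cos θ by linarith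
  rcases le_total θ (π / 2) with hθ | hθ
  · simpa using monotoneOn_mul_sin_add_cos ⟨le_rfl, by positivity⟩ ⟨h0, hθ⟩ h0
  · have hθ₀ : θ ≤ arccos (-0.689) := by
      rw [← arccos_cos h0 hπ]
      exact antitone_arccos hcos
    exact one_le_mul_sin_add_cos_arccos.trans
      (antitoneOn_mul_sin_add_cos ⟨hθ, hπ⟩ ⟨hθ.trans hθ₀, arccos_le_pi _⟩ hθ₀)

lemma one_sub_le_arccos_mul_sqrt {x : ℝ} (hx : -0.689 ≤ x) (hx1 : x ≤ 1) :
    1 - x ≤ arccos x * √(1 - x ^ 2) := by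
  have hcos : cos (arccos x) = x := cos_arccos (by norm_num at hx; linarith) hx1
  simpa [hcos, sin_arccos] using
    one_sub_cos_le_mul_sin (arccos_nonneg x) (arccos_le_pi x) (by rwa [hcos])

lemma monotoneOn_arccos_div_one_sub :
    MonotoneOn (fun x => arccos x / (1 - x)) (Ico (-0.689) 1) := by
  refine monotoneOn_of_hasDerivWithinAt_nonneg
    (f' := fun x => (arccos x - (1 - x) / √(1 - x ^ 2)) / (1 - x) ^ 2) (convex_Ico _ _)
    (continuous_arccos.continuousOn.div (by fun_prop) fun x hx => sub_ne_zero.2 hx.2.ne')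
    (fun x hx => ?_) (fun x hx => ?_) <;> rw [interior_Ico] at hx
  · have hx₁ : -1 < x := by norm_num at hx; linarith [hx.1]
    exact (hasDerivAt_arccos hx₁.ne' hx.2.ne).div ((hasDerivAt_id x).const_sub 1)
      (sub_ne_zero.2 hx.2.ne') |>.congr_deriv (by simp only [id_eq]; ring) |>.hasDerivWithinAt
  · have hs : 0 < √(1 - x ^ 2) := sqrt_pos.2 (by nlinarith [hx.1, hx.2])
    have := one_sub_le_arccos_mul_sqrt hx.1.le hx.2.le
    exact div_nonneg (sub_nonneg.2 ((div_le_iff₀ hs).2 this)) (sq_nonneg _)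

theorem stmt_2_general (ε : ℝ) (hε : ε ≤ 0.689) (x : ℝ) (hx : |x| ≤ ε) :
    2 * arccos (-ε) / (π * (1 + ε)) ≤ 2 * arccos x / (π * (1 - x)) := by
  obtain ⟨hxl, hxr⟩ := abs_le.mp hx
  norm_num at hε
  have h := monotoneOn_arccos_div_one_sub ⟨by norm_num; linarith, by linarith⟩
    ⟨by norm_num; linarith, by linarith⟩ hxl
  simp only [sub_neg_eq_add] at h
  rw [mul_div_mul_comm, mul_div_mul_comm]
  gcongr

/-- For `0 ≤ ε ≤ 0.689` and `|x| ≤ ε`, `x < 1`, the Goemans–Williamson ratio function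
attains its minimum on `[-ε, ε]` at the left endpoint: `g(x) ≥ g(-ε)`. -/
theorem stmt_2 (ε : ℝ) (hε0 : 0 ≤ ε) (hε : ε ≤ 0.689) (x : ℝ) (hx : |x| ≤ ε)
    (hx1 : x < 1) :
    2 * arccos (-ε) / (π * (1 + ε)) ≤ 2 * arccos x / (π * (1 - x)) :=
  stmt_2_general ε hε x hx
end

section
/- Let (Y₁, Y₂) be a centered bivariate Gaussian vector with unit variances and correlation σ ∈ [-1, 1], and set Z₁ = sign(Y₁), Z₂ = sign(Y₂) (with values in {-1, +1}). Then E[Z₁ Z₂] = (2/π) arcsin(σ). -/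
/-!
A positively homogeneous function of degree zero integrates against the standard Gaussian on
`ℝ²` to its average over the unit circle, because in polar coordinates the Gaussian density is
radial and the radial factor `r e^{-r²/2}` has integral one. With `α = arcsin σ`, the linear form
`σ x + √(1 - σ²) y` equals `sin (θ + α)` at `(cos θ, sin θ)`, and the product of the signs of
`cos θ` and `sin (θ + α)` is `+1` on two arcs of total length `π + 2α` and `-1` on the rest.
-/

open Real MeasureTheory ProbabilityTheory Set Function

noncomputable def pmSign (y : ℝ) : ℝ := if 0 ≤ y then 1 else -1

@[simp] lemma pmSign_of_nonneg {y : ℝ} (h : 0 ≤ y) : pmSign y = 1 := if_pos h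

@[simp] lemma pmSign_of_neg {y : ℝ} (h : y < 0) : pmSign y = -1 := if_neg h.not_ge

lemma pmSign_mul_of_pos {r : ℝ} (hr : 0 < r) (y : ℝ) : pmSign (r * y) = pmSign y := by
  simp only [pmSign, mul_nonneg_iff_of_pos_left hr]

@[fun_prop]
lemma measurable_pmSign : Measurable pmSign :=
  Measurable.ite measurableSet_Ici measurable_const measurable_const

section PiecewiseConstant

variable {E : Type*} [NormedAddCommGroup E] {f : ℝ → E} {c : E} {a b : ℝ}

lemma intervalIntegrable_of_eqOn_Ioo (hab : a ≤ b)
    (h : EqOn f (fun _ => c) (Ioo a b)) : IntervalIntegrable f volume a b :=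
  (intervalIntegrable_congr_uIoo (uIoo_of_le hab ▸ h)).2 intervalIntegrable_const

lemma integral_of_eqOn_Ioo [NormedSpace ℝ E] [CompleteSpace E] (hab : a ≤ b)
    (h : EqOn f (fun _ => c) (Ioo a b)) : ∫ x in a..b, f x = (b - a) • c := by
  rw [intervalIntegral.integral_congr_Ioo_of_le hab h, intervalIntegral.integral_const]

end PiecewiseConstant

lemma integral_pmSign_cos_mul_pmSign_sin_add {α : ℝ} (hα₁ : -(π / 2) ≤ α) (hα₂ : α ≤ π / 2) :
    ∫ θ in -π..π, pmSign (cos θ) * pmSign (sin (θ + α)) = 4 * α := by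
  have hπ := pi_pos
  set f : ℝ → ℝ := fun θ => pmSign (cos θ) * pmSign (sin (θ + α))
  have hper : Periodic f (2 * π) := fun θ => by
    simp only [f, cos_add_two_pi, add_right_comm θ (2 * π) α, sin_add_two_pi]
  have h₁ : EqOn f (fun _ => -1) (Ioo (-(π / 2)) (-α)) := fun θ hθ => by
    have hc : 0 < cos θ := cos_pos_of_mem_Ioo ⟨hθ.1, by linarith [hθ.2]⟩
    have hs : sin (θ + α) < 0 :=
      sin_neg_of_neg_of_neg_pi_lt (by linarith [hθ.2]) (by linarith [hθ.1])
    simp [f, hc.le, hs]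
  have h₂ : EqOn f (fun _ => 1) (Ioo (-α) (π / 2)) := fun θ hθ => by
    have hc : 0 < cos θ := cos_pos_of_mem_Ioo ⟨by linarith [hθ.1], hθ.2⟩
    have hs : 0 < sin (θ + α) := sin_pos_of_pos_of_lt_pi (by linarith [hθ.1]) (by linarith [hθ.2])
    simp [f, hc.le, hs.le]
  have h₃ : EqOn f (fun _ => -1) (Ioo (π / 2) (π - α)) := fun θ hθ => by
    have hc : cos θ < 0 := cos_neg_of_pi_div_two_lt_of_lt hθ.1 (by linarith [hθ.2])
    have hs : 0 < sin (θ + α) := sin_pos_of_pos_of_lt_pi (by linarith [hθ.1]) (by linarith [hθ.2])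
    simp [f, hc, hs.le]
  have h₄ : EqOn f (fun _ => 1) (Ioo (π - α) (3 * π / 2)) := fun θ hθ => by
    have hc : cos θ < 0 := cos_neg_of_pi_div_two_lt_of_lt (by linarith [hθ.1]) (by linarith [hθ.2])
    have hs : sin (θ + α) < 0 := by
      rw [← neg_neg (sin _), ← sin_sub_pi, neg_lt_zero]
      exact sin_pos_of_pos_of_lt_pi (by linarith [hθ.1]) (by linarith [hθ.2])
    simp [f, hc, hs]
  have i₁ := intervalIntegrable_of_eqOn_Ioo (by linarith) h₁
  have i₂ := intervalIntegrable_of_eqOn_Ioo (by linarith) h₂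
  have i₃ := intervalIntegrable_of_eqOn_Ioo (by linarith) h₃
  have i₄ := intervalIntegrable_of_eqOn_Ioo (by linarith) h₄
  calc ∫ θ in -π..π, f θ = ∫ θ in -(π / 2)..3 * π / 2, f θ := by
        convert hper.intervalIntegral_add_eq (-π) (-(π / 2)) using 2 <;> ring
    _ = (∫ θ in -(π / 2)..-α, f θ) + (∫ θ in -α..π / 2, f θ) + (∫ θ in π / 2..π - α, f θ)
          + ∫ θ in π - α..3 * π / 2, f θ := by
        rw [intervalIntegral.integral_add_adjacent_intervals i₁ i₂,
          intervalIntegral.integral_add_adjacent_intervals (i₁.trans i₂) i₃,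
          intervalIntegral.integral_add_adjacent_intervals ((i₁.trans i₂).trans i₃) i₄]
    _ = 4 * α := by
        rw [integral_of_eqOn_Ioo (by linarith) h₁, integral_of_eqOn_Ioo (by linarith) h₂,
          integral_of_eqOn_Ioo (by linarith) h₃, integral_of_eqOn_Ioo (by linarith) h₄]
        simp only [smul_eq_mul]
        ring

lemma integral_Ioi_mul_exp_neg_sq_div_two :
    ∫ r in Ioi (0 : ℝ), r * exp (-(r ^ 2) / 2) = 1 := by
  have h := integral_mul_cexp_neg_mul_sq (b := 1 / 2) (by norm_num)
  apply Complex.ofReal_injective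
  rw [← integral_complex_ofReal]
  convert h using 1
  · congr with r
    push_cast
    ring_nf
  · norm_num

lemma gaussianPDFReal_mul_gaussianPDFReal (x y : ℝ) :
    gaussianPDFReal 0 1 x * gaussianPDFReal 0 1 y = (2 * π)⁻¹ * exp (-(x ^ 2 + y ^ 2) / 2) := by
  simp only [gaussianPDFReal_def, NNReal.coe_one, mul_one, sub_zero]
  rw [mul_mul_mul_comm, ← mul_inv, mul_self_sqrt (by positivity), ← exp_add]
  ring_nf

lemma integral_gaussianReal_prod_eq_integral_mul (F : ℝ × ℝ → ℝ) :
    ∫ z, F z ∂(gaussianReal 0 1).prod (gaussianReal 0 1) =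
      ∫ z, gaussianPDFReal 0 1 z.1 * gaussianPDFReal 0 1 z.2 * F z := by
  rw [gaussianReal_of_var_ne_zero 0 one_ne_zero,
    prod_withDensity (measurable_gaussianPDF _ _) (measurable_gaussianPDF _ _),
    integral_withDensity_eq_integral_toReal_smul (by fun_prop)
      (ae_of_all _ fun _ => ENNReal.mul_lt_top gaussianPDF_lt_top gaussianPDF_lt_top),
    Measure.volume_eq_prod]
  simp only [ENNReal.toReal_mul, toReal_gaussianPDF, smul_eq_mul]

lemma integral_gaussianReal_prod_of_homogeneous (F : ℝ × ℝ → ℝ)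
    (hF : ∀ r : ℝ, 0 < r → ∀ z, F (r • z) = F z) :
    ∫ z, F z ∂(gaussianReal 0 1).prod (gaussianReal 0 1) =
      (2 * π)⁻¹ * ∫ θ in -π..π, F (cos θ, sin θ) := by
  rw [integral_gaussianReal_prod_eq_integral_mul, ← integral_comp_polarCoord_symm]
  calc _ = ∫ p in Ioi 0 ×ˢ Ioo (-π) π,
        p.1 * exp (-(p.1 ^ 2) / 2) * ((2 * π)⁻¹ * F (cos p.2, sin p.2)) := by
        refine setIntegral_congr_fun polarCoord.open_target.measurableSet fun p hp => ?_
        have hF' : F (p.1 * cos p.2, p.1 * sin p.2) = F (cos p.2, sin p.2) := by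
          simpa using hF p.1 hp.1 (cos p.2, sin p.2)
        rw [polarCoord_symm_apply, smul_eq_mul, hF', gaussianPDFReal_mul_gaussianPDFReal,
          mul_pow, mul_pow, ← mul_add, cos_sq_add_sin_sq, mul_one]
        ring
    _ = _ := by
      rw [Measure.volume_eq_prod, setIntegral_prod_mul (fun r => r * exp (-(r ^ 2) / 2))
        (fun θ => (2 * π)⁻¹ * F (cos θ, sin θ)), integral_Ioi_mul_exp_neg_sq_div_two,
        integral_const_mul, intervalIntegral.integral_of_le (by linarith [pi_pos]),
        integral_Ioc_eq_integral_Ioo, one_mul]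

lemma sin_add_arcsin {σ : ℝ} (h₁ : -1 ≤ σ) (h₂ : σ ≤ 1) (θ : ℝ) :
    sin (θ + arcsin σ) = σ * cos θ + √(1 - σ ^ 2) * sin θ := by
  rw [sin_add, sin_arcsin h₁ h₂, cos_arcsin]
  ring

/-- Grothendieck's identity: with `Y₁ = X₁`, `Y₂ = σ X₁ + √(1-σ²) X₂` a centered
bivariate Gaussian with unit variances and correlation `σ ∈ [-1,1]`, and
`Zᵢ = sign Yᵢ ∈ {-1, +1}`, one has `E[Z₁ Z₂] = (2/π) arcsin σ`. -/
theorem stmt_5 (Ω : Type*) [MeasureSpace Ω] [IsProbabilityMeasure (ℙ : Measure Ω)]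
    (X₁ X₂ : Ω → ℝ) (hm1 : Measurable X₁) (hm2 : Measurable X₂)
    (hindep : IndepFun X₁ X₂ ℙ)
    (h1 : Measure.map X₁ ℙ = gaussianReal 0 1)
    (h2 : Measure.map X₂ ℙ = gaussianReal 0 1)
    (σ : ℝ) (hσ : σ ∈ Set.Icc (-1 : ℝ) 1)
    (sgn : ℝ → ℝ) (hsgn : ∀ y : ℝ, sgn y = if 0 ≤ y then 1 else -1) :
    ∫ ω, sgn (X₁ ω) * sgn (σ * X₁ ω + Real.sqrt (1 - σ ^ 2) * X₂ ω) ∂ℙ =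
      (2 / π) * arcsin σ := by
  obtain ⟨hσ₁, hσ₂⟩ := hσ
  obtain rfl : sgn = pmSign := funext hsgn
  set F : ℝ × ℝ → ℝ := fun z => pmSign z.1 * pmSign (σ * z.1 + √(1 - σ ^ 2) * z.2)
  have hF : Measurable F := by
    unfold F
    fun_prop
  have hmap :
      Measure.map (fun ω => (X₁ ω, X₂ ω)) ℙ = (gaussianReal 0 1).prod (gaussianReal 0 1) := by
    rw [hindep.map_prod_eq_prod_map_map hm1.aemeasurable hm2.aemeasurable, h1, h2]
  have hF_homogeneous : ∀ r : ℝ, 0 < r → ∀ z, F (r • z) = F z := fun r hr z => by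
    simp only [F, Prod.smul_fst, Prod.smul_snd, smul_eq_mul, pmSign_mul_of_pos hr,
      show σ * (r * z.1) + √(1 - σ ^ 2) * (r * z.2) = r * (σ * z.1 + √(1 - σ ^ 2) * z.2) by ring]
  calc ∫ ω, F (X₁ ω, X₂ ω) ∂ℙ = ∫ z, F z ∂(gaussianReal 0 1).prod (gaussianReal 0 1) := by
        rw [← hmap, integral_map (hm1.prodMk hm2).aemeasurable hF.aestronglyMeasurable]
    _ = (2 * π)⁻¹ * ∫ θ in -π..π, pmSign (cos θ) * pmSign (sin (θ + arcsin σ)) := by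
        simp only [integral_gaussianReal_prod_of_homogeneous F hF_homogeneous, F,
          sin_add_arcsin hσ₁ hσ₂]
    _ = 2 / π * arcsin σ := by
        rw [integral_pmSign_cos_mul_pmSign_sin_add (neg_pi_div_two_le_arcsin σ)
          (arcsin_le_pi_div_two σ)]
        field_simp
        ring
end

section
/- Let (Y₁, Y₂) be a centered bivariate Gaussian with unit variances and correlation σ ∈ [-1,1]. Then P(sign(Y₁) ≠ sign(Y₂)) = arccos(σ)/π. -/
/-!
Write `Y₂ = cos θ · X₁ + sin θ · X₂` with `θ = arccos σ`, so that the question is about the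
standard Gaussian measure `γ₂` on the plane. Its density depends only on the radius, so in polar
coordinates the angle is uniform on `(-π, π)` and a cone receives `γ₂`-mass equal to its angular
measure over `2π`. Off two null lines, the signs of `X₁` and `Y₂` disagree exactly on the wedge
`{X₁ > 0, Y₂ < 0}` of opening angle `θ` and on its reflection through the origin; hence the
probability is `2 · θ / (2π) = arccos σ / π`.
-/

open Real MeasureTheory ProbabilityTheory Set
open scoped Pointwise

local notation "γ₂" => Measure.prod (gaussianReal 0 1) (gaussianReal 0 1)

lemma gaussianPDF_mul_cos_mul_gaussianPDF_mul_sin (r φ : ℝ) :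
    gaussianPDF 0 1 (r * cos φ) * gaussianPDF 0 1 (r * sin φ) =
      gaussianPDF 0 1 r * gaussianPDF 0 1 0 := by
  simp only [gaussianPDF, gaussianPDFReal, NNReal.coe_one, mul_one, sub_zero]
  rw [← ENNReal.ofReal_mul (by positivity), ← ENNReal.ofReal_mul (by positivity)]
  congr 1
  have hr : (r * cos φ) ^ 2 + (r * sin φ) ^ 2 = r ^ 2 + 0 ^ 2 := by
    linear_combination r ^ 2 * cos_sq_add_sin_sq φ
  rw [mul_mul_mul_comm, mul_mul_mul_comm _ (rexp _), ← exp_add, ← exp_add]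
  congr 2
  linear_combination (-1 / 2 : ℝ) * hr

lemma gaussianReal_prod_eq_withDensity :
    γ₂ = volume.withDensity fun p : ℝ × ℝ ↦ gaussianPDF 0 1 p.1 * gaussianPDF 0 1 p.2 := by
  rw [gaussianReal_of_var_ne_zero _ one_ne_zero,
    prod_withDensity (measurable_gaussianPDF _ _) (measurable_gaussianPDF _ _),
    Measure.volume_eq_prod]

lemma gaussianReal_prod_map_neg : Measure.map Neg.neg γ₂ = γ₂ := by
  have h := Measure.map_prod_map (gaussianReal 0 1) (gaussianReal 0 1) measurable_neg
    measurable_neg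
  simp only [gaussianReal_map_neg, neg_zero] at h
  conv_rhs => rw [h]
  rfl

lemma gaussianReal_prod_apply_eq_radial_mul_volume {E : Set (ℝ × ℝ)} {S : Set ℝ}
    (hE : MeasurableSet E) (hS : MeasurableSet S)
    (hES : ∀ r > 0, ∀ φ ∈ Ioo (-π) π, (r * cos φ, r * sin φ) ∈ E ↔ φ ∈ S) :
    γ₂ E = (∫⁻ r in Ioi 0, ENNReal.ofReal r * (gaussianPDF 0 1 r * gaussianPDF 0 1 0)) *
      volume (S ∩ Ioo (-π) π) := by
  have hpolar : ∀ p ∈ polarCoord.target, ENNReal.ofReal p.1 •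
      E.indicator (fun p ↦ gaussianPDF 0 1 p.1 * gaussianPDF 0 1 p.2) (polarCoord.symm p) =
      ENNReal.ofReal p.1 * (gaussianPDF 0 1 p.1 * gaussianPDF 0 1 0) * S.indicator 1 p.2 := by
    rintro ⟨r, φ⟩ ⟨hr, hφ⟩
    have hmem := hES r hr φ hφ
    rw [polarCoord_symm_apply, smul_eq_mul]
    by_cases h : φ ∈ S
    · simp [indicator_of_mem (hmem.2 h), h, gaussianPDF_mul_cos_mul_gaussianPDF_mul_sin]
    · simp [indicator_of_notMem (mt hmem.1 h), h]
  rw [gaussianReal_prod_eq_withDensity, withDensity_apply _ hE, ← lintegral_indicator hE,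
    ← lintegral_comp_polarCoord_symm,
    setLIntegral_congr_fun polarCoord.open_target.measurableSet hpolar,
    show polarCoord.target = Ioi 0 ×ˢ Ioo (-π) π from rfl, Measure.volume_eq_prod,
    ← Measure.prod_restrict,
    lintegral_prod_mul (f := fun r ↦ ENNReal.ofReal r * (gaussianPDF 0 1 r * gaussianPDF 0 1 0))
      (by fun_prop) (by fun_prop),
    lintegral_indicator_one hS, Measure.restrict_apply hS]

/-- The radial factor is never computed: the case `E = univ` shows that it equals `(2π)⁻¹`. -/
lemma gaussianReal_prod_apply_of_polar {E : Set (ℝ × ℝ)} {S : Set ℝ}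
    (hE : MeasurableSet E) (hS : MeasurableSet S)
    (hES : ∀ r > 0, ∀ φ ∈ Ioo (-π) π, (r * cos φ, r * sin φ) ∈ E ↔ φ ∈ S) :
    γ₂ E = volume (S ∩ Ioo (-π) π) / ENNReal.ofReal (2 * π) := by
  have hnorm := gaussianReal_prod_apply_eq_radial_mul_volume MeasurableSet.univ
    MeasurableSet.univ fun _ _ _ _ ↦ by simp only [mem_univ]
  rw [measure_univ, univ_inter, Real.volume_Ioo, sub_neg_eq_add, ← two_mul] at hnorm
  rw [gaussianReal_prod_apply_eq_radial_mul_volume hE hS hES,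
    ENNReal.eq_inv_of_mul_eq_one_left hnorm.symm, mul_comm, div_eq_mul_inv]

lemma cos_mul_mul_cos_add_sin_mul_mul_sin (θ r φ : ℝ) :
    cos θ * (r * cos φ) + sin θ * (r * sin φ) = r * cos (φ - θ) := by
  rw [cos_sub]
  ring

lemma gaussianReal_prod_line_eq_zero (θ : ℝ) :
    γ₂ {p | cos θ * p.1 + sin θ * p.2 = 0} = 0 := by
  have hS : {φ : ℝ | cos (φ - θ) = 0}.Countable := by
    refine (countable_range fun k : ℤ ↦ (2 * k + 1) * π / 2 + θ).mono fun φ hφ ↦ ?_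
    obtain ⟨k, hk⟩ := cos_eq_zero_iff.1 hφ
    exact ⟨k, by linarith⟩
  rw [gaussianReal_prod_apply_of_polar (measurableSet_eq_fun (by fun_prop) (by fun_prop))
    hS.measurableSet (fun r hr φ _ ↦ by simp [cos_mul_mul_cos_add_sin_mul_mul_sin, hr.ne']),
    measure_mono_null inter_subset_left (hS.measure_zero _), ENNReal.zero_div]

lemma cos_pos_and_cos_sub_neg_iff {θ φ : ℝ} (hθ : θ ∈ Icc 0 π) (hφ : φ ∈ Ioo (-π) π) :
    0 < cos φ ∧ cos (φ - θ) < 0 ↔ φ ∈ Ioo (-(π / 2)) (θ - π / 2) := by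
  obtain ⟨hθ₀, hθπ⟩ := hθ
  obtain ⟨hφ₀, hφπ⟩ := hφ
  constructor
  · rintro ⟨hcos, hcos_sub⟩
    refine ⟨lt_of_not_ge fun h ↦ ?_, lt_of_not_ge fun h ↦ ?_⟩
    · have := cos_nonpos_of_pi_div_two_le_of_le (x := -φ) (by linarith) (by linarith)
      rw [cos_neg] at this
      linarith
    · by_cases hφ2 : φ < π / 2
      · have := cos_nonneg_of_mem_Icc (x := φ - θ) ⟨by linarith, by linarith⟩
        linarith
      · have := cos_nonpos_of_pi_div_two_le_of_le (x := φ) (by linarith) (by linarith)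
        linarith
  · rintro ⟨h₁, h₂⟩
    refine ⟨cos_pos_of_mem_Ioo ⟨h₁, by linarith⟩, ?_⟩
    rw [← cos_neg, neg_sub]
    exact cos_neg_of_pi_div_two_lt_of_lt (by linarith) (by linarith)

lemma gaussianReal_prod_wedge {θ : ℝ} (hθ : θ ∈ Icc 0 π) :
    γ₂ {p | 0 < p.1 ∧ cos θ * p.1 + sin θ * p.2 < 0} =
      ENNReal.ofReal θ / ENNReal.ofReal (2 * π) := by
  have hsub : Ioo (-(π / 2)) (θ - π / 2) ⊆ Ioo (-π) π :=
    Ioo_subset_Ioo (by linarith [pi_pos]) (by linarith [hθ.2, pi_pos])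
  rw [gaussianReal_prod_apply_of_polar (by measurability) measurableSet_Ioo,
    inter_eq_left.2 hsub, Real.volume_Ioo, sub_neg_eq_add, sub_add_cancel]
  intro r hr φ hφ
  have hneg : r * cos (φ - θ) < 0 ↔ cos (φ - θ) < 0 :=
    ⟨fun h ↦ neg_of_mul_neg_right h hr.le, mul_neg_of_pos_of_neg hr⟩
  rw [← cos_pos_and_cos_sub_neg_iff hθ hφ, ← hneg, ← mul_pos_iff_of_pos_left hr,
    ← cos_mul_mul_cos_add_sin_mul_mul_sin]
  rfl

lemma nonneg_ne_nonneg_iff {α : Type*} [Zero α] [LinearOrder α] {x y : α}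
    (hx : x ≠ 0) (hy : y ≠ 0) :
    (0 ≤ x) ≠ (0 ≤ y) ↔ 0 < x ∧ y < 0 ∨ x < 0 ∧ 0 < y := by
  rcases hx.lt_or_gt with hx | hx <;> rcases hy.lt_or_gt with hy | hy <;>
    simp [hx, hy, hx.le, hy.le, hx.not_ge, hy.not_ge, hx.not_gt, hy.not_gt]

lemma gaussianReal_prod_sign_ne {θ : ℝ} (hθ : θ ∈ Icc 0 π) :
    γ₂ {p | (0 ≤ p.1) ≠ (0 ≤ cos θ * p.1 + sin θ * p.2)} = ENNReal.ofReal (θ / π) := by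
  set E : Set (ℝ × ℝ) := {p | (0 ≤ p.1) ≠ (0 ≤ cos θ * p.1 + sin θ * p.2)}
  set W : Set (ℝ × ℝ) := {p | 0 < p.1 ∧ cos θ * p.1 + sin θ * p.2 < 0}
  have hW : MeasurableSet W := by measurability
  have hnull : ∀ᵐ p ∂γ₂, p.1 ≠ 0 ∧ cos θ * p.1 + sin θ * p.2 ≠ 0 := by
    have h0 := gaussianReal_prod_line_eq_zero 0
    simp only [cos_zero, sin_zero, one_mul, zero_mul, add_zero] at h0
    refine ae_iff.2 (measure_mono_null (fun p hp ↦ ?_)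
      (measure_union_null h0 (gaussianReal_prod_line_eq_zero θ)))
    simpa only [mem_union, mem_ofPred_eq, not_and_or, not_not] using hp
  have hae : E =ᵐ[γ₂] (W ∪ -W : Set (ℝ × ℝ)) := by
    refine Filter.eventuallyEq_set.2 ?_
    filter_upwards [hnull] with p ⟨h₁, h₂⟩
    simp only [E, W, mem_union, mem_neg, mem_ofPred_eq, Prod.fst_neg, Prod.snd_neg, mul_neg,
      ← neg_add, neg_pos, neg_lt_zero]
    exact nonneg_ne_nonneg_iff h₁ h₂
  have hneg : γ₂ (-W) = γ₂ W :=
    calc γ₂ (-W) = Measure.map Neg.neg γ₂ W := (Measure.map_apply measurable_neg hW).symm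
      _ = γ₂ W := by rw [gaussianReal_prod_map_neg]
  have hdisj : Disjoint W (-W) := disjoint_left.2 fun p hp hp' ↦ by
    simp only [W, mem_neg, mem_ofPred_eq, Prod.fst_neg] at hp hp'
    linarith [hp.1, hp'.1]
  have hθ₀ : 0 ≤ θ / (2 * π) := div_nonneg hθ.1 (by positivity)
  rw [measure_congr hae, measure_union hdisj hW.neg, hneg, gaussianReal_prod_wedge hθ,
    ← ENNReal.ofReal_div_of_pos (by positivity), ← ENNReal.ofReal_add hθ₀ hθ₀]
  congr 1
  field_simp
  ring

/-- With `Y₁ = X₁`, `Y₂ = σ X₁ + √(1-σ²) X₂` a centered bivariate Gaussian with unit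
variances and correlation `σ ∈ [-1,1]`, the probability that `sign Y₁ ≠ sign Y₂` equals
`arccos σ / π`. -/
theorem stmt_6 (Ω : Type*) [MeasureSpace Ω] [IsProbabilityMeasure (ℙ : Measure Ω)]
    (X₁ X₂ : Ω → ℝ) (hm1 : Measurable X₁) (hm2 : Measurable X₂)
    (hindep : IndepFun X₁ X₂ ℙ)
    (h1 : Measure.map X₁ ℙ = gaussianReal 0 1)
    (h2 : Measure.map X₂ ℙ = gaussianReal 0 1)
    (σ : ℝ) (hσ : σ ∈ Set.Icc (-1 : ℝ) 1)
    (sgn : ℝ → ℝ) (hsgn : ∀ y : ℝ, sgn y = if 0 ≤ y then 1 else -1) :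
    ℙ {ω | sgn (X₁ ω) ≠ sgn (σ * X₁ ω + Real.sqrt (1 - σ ^ 2) * X₂ ω)} =
      ENNReal.ofReal (arccos σ / π) := by
  set E : Set (ℝ × ℝ) := {p | (0 ≤ p.1) ≠ (0 ≤ cos (arccos σ) * p.1 + sin (arccos σ) * p.2)}
  have hE : MeasurableSet E := by measurability
  have hsgn_ne (a b : ℝ) : sgn a ≠ sgn b ↔ (0 ≤ a) ≠ (0 ≤ b) := by
    rw [hsgn, hsgn]
    split_ifs <;> norm_num [*]
  have hpre : {ω | sgn (X₁ ω) ≠ sgn (σ * X₁ ω + √(1 - σ ^ 2) * X₂ ω)} =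
      (fun ω ↦ (X₁ ω, X₂ ω)) ⁻¹' E := by
    ext ω
    simp only [E, mem_preimage, mem_ofPred_eq, hsgn_ne, cos_arccos hσ.1 hσ.2, sin_arccos]
  rw [hpre, ← Measure.map_apply (hm1.prodMk hm2) hE,
    (indepFun_iff_map_prod_eq_prod_map_map hm1.aemeasurable hm2.aemeasurable).1 hindep, h1, h2]
  exact gaussianReal_prod_sign_ne ⟨arccos_nonneg σ, arccos_le_pi σ⟩
end

section
/- Let A and Σ be n×n real positive semidefinite matrices, with Σ having unit diagonal. Then (2/π) Σ_{i,j} A_{ij} arcsin(Σ_{ij}) ≥ (2/π) Σ_{i,j} A_{ij} Σ_{ij}. Equivalently, the Gaussian-rounding value tr(A ∘ ((2/π)arcsin∘Σ)) is at least (2/π) tr(A ∘ Σ) where ∘ denotes entrywise operations. -/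
/-!
Let `φ t = ∑ i j, A i j * (arcsin (t * S i j) - t * S i j)`. For `0 < t < 1` its derivative is
the entrywise pairing of `A` with `S ⊙ G`, where `G` applies `y ↦ 1 / √(1 - y) - 1` entrywise to
the PSD matrix `(t • S) ⊙ (t • S)`, whose entries lie in `(-1, 1)` because `|S i j| ≤ 1`. That
function is a binomial series with nonnegative coefficients, so `G` is a limit of nonnegative
combinations of Hadamard powers and is PSD by the Schur product theorem; hence `φ' ≥ 0`, and
`φ 1 ≥ φ 0 = 0` by continuity of `arcsin` up to the endpoint.
-/

open Real

theorem Ring.choose_add_sub_one_nonneg {a : ℝ} (ha : 0 < a) (n : ℕ) :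
    0 ≤ Ring.choose (a + n - 1) n := by
  have h := Ring.factorial_nsmul_multichoose_eq_ascPochhammer a n
  rw [Polynomial.ascPochhammer_smeval_eq_eval, nsmul_eq_mul] at h
  rw [← Ring.multichoose_eq]
  exact nonneg_of_mul_nonneg_right (h ▸ (ascPochhammer_pos n a ha).le) (by positivity)

theorem hasSum_one_div_sqrt_one_sub {y : ℝ} (hy : |y| < 1) :
    HasSum (fun n : ℕ => Ring.choose (1 / 2 + n - 1 : ℝ) n * y ^ n) (1 / √(1 - y)) := by
  have h := (one_div_one_sub_rpow_hasFPowerSeriesOnBall_zero (1 / 2)).hasSum (y := y)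
    (by simpa [enorm_eq_nnnorm, ← NNReal.coe_lt_one] using hy)
  simp only [FormalMultilinearSeries.ofScalars_apply_eq, smul_eq_mul, zero_add] at h
  rw [sqrt_eq_rpow]
  simpa only [mul_comm] using h

theorem hasDerivAt_arcsin_mul_sub {s t : ℝ} (h : |t * s| < 1) :
    HasDerivAt (fun t => arcsin (t * s) - t * s) (s * (1 / √(1 - (t * s) ^ 2) - 1)) t := by
  obtain ⟨h₁, h₂⟩ := abs_lt.mp h
  have hlin : HasDerivAt (fun t => t * s) s t := by simpa using (hasDerivAt_id t).mul_const s
  have h' := ((hasDerivAt_arcsin h₁.ne' h₂.ne).comp t hlin).sub hlin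
  rwa [show 1 / √(1 - (t * s) ^ 2) * s - s = s * (1 / √(1 - (t * s) ^ 2) - 1) by ring] at h'

namespace Matrix

variable {ι : Type*}

theorem PosSemidef.mul_apply_le {S : Matrix ι ι ℝ} (hS : S.PosSemidef) (i j : ι) :
    S i j * S j i ≤ S i i * S j j := by
  have h := (hS.submatrix ![i, j]).det_nonneg
  rw [det_fin_two] at h
  simp only [submatrix_apply, cons_val_zero, cons_val_one] at h
  linarith

theorem PosSemidef.abs_apply_le_one {S : Matrix ι ι ℝ} (hS : S.PosSemidef)
    (hdiag : ∀ i, S i i = 1) (i j : ι) : |S i j| ≤ 1 := by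
  have h := hS.mul_apply_le i j
  rw [hdiag, hdiag, ← hS.isHermitian.apply j i, star_trivial] at h
  exact abs_le_one_iff_mul_self_le_one.mpr (by linarith)

variable [Fintype ι]

theorem PosSemidef.sum_mul_nonneg {A B : Matrix ι ι ℝ} (hA : A.PosSemidef) (hB : B.PosSemidef) :
    0 ≤ ∑ i, ∑ j, A i j * B i j := by
  simpa [dotProduct, mulVec] using (hA.hadamard hB).dotProduct_mulVec_nonneg 1

theorem PosSemidef.map_pow {A : Matrix ι ι ℝ} (hA : A.PosSemidef) (k : ℕ) :
    (A.map (· ^ k)).PosSemidef := by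
  induction k with
  | zero =>
    have hJ : A.map (· ^ 0) = vecMulVec 1 (star 1) := by ext; simp [vecMulVec]
    exact hJ ▸ posSemidef_vecMulVec_self_star 1
  | succ k ih =>
    have hsucc : A.map (· ^ (k + 1)) = A ⊙ A.map (· ^ k) := by ext; simp [pow_succ']
    exact hsucc ▸ hA.hadamard ih

theorem PosSemidef.of_hasSum_pow {A F : Matrix ι ι ℝ} (hA : A.PosSemidef) {c : ℕ → ℝ}
    (hc : ∀ k, 0 ≤ c k) (hF : ∀ i j, HasSum (fun k => c k * A i j ^ k) (F i j)) :
    F.PosSemidef := by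
  rw [posSemidef_iff_dotProduct_mulVec]
  refine ⟨?_, fun x => ?_⟩
  · ext i j
    refine (hF j i).unique ?_
    simpa [← hA.isHermitian.apply i j] using hF i j
  · have hq : HasSum (fun k => ∑ i, ∑ j, x i * (c k * A i j ^ k) * x j)
        (∑ i, ∑ j, x i * F i j * x j) :=
      hasSum_sum fun i _ => hasSum_sum fun j _ => ((hF i j).mul_left (x i)).mul_right (x j)
    have hF_quad : star x ⬝ᵥ F *ᵥ x = ∑ i, ∑ j, x i * F i j * x j := by
      simp [dotProduct, mulVec, Finset.mul_sum, mul_assoc]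
    rw [hF_quad]
    refine hq.nonneg fun k => ?_
    have := ((hA.map_pow k).smul (hc k)).dotProduct_mulVec_nonneg x
    simpa [dotProduct, mulVec, Finset.mul_sum, mul_assoc, mul_left_comm] using this

theorem PosSemidef.map_one_div_sqrt_one_sub_sub_one {T : Matrix ι ι ℝ} (hT : T.PosSemidef)
    (hT1 : ∀ i j, |T i j| < 1) : (T.map fun y => 1 / √(1 - y) - 1).PosSemidef := by
  set c : ℕ → ℝ := fun n => Ring.choose (1 / 2 + n - 1 : ℝ) n
  refine hT.of_hasSum_pow (c := Function.update c 0 0) (fun k => ?_) (fun i j => ?_)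
  · rcases k with _ | k
    · simp
    · simpa [c] using Ring.choose_add_sub_one_nonneg one_half_pos (k + 1)
  · have h := (hasSum_one_div_sqrt_one_sub (hT1 i j)).update 0 0
    have hterms : Function.update (fun n => c n * T i j ^ n) 0 0 =
        fun n => Function.update c 0 0 n * T i j ^ n := by
      ext (_ | n) <;> simp
    rwa [hterms, Ring.choose_zero_right, pow_zero, one_mul, zero_sub, neg_add_eq_sub] at h

theorem PosSemidef.sum_mul_le_sum_mul_arcsin {A S : Matrix ι ι ℝ} (hA : A.PosSemidef)
    (hS : S.PosSemidef) (hdiag : ∀ i, S i i = 1) :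
    ∑ i, ∑ j, A i j * S i j ≤ ∑ i, ∑ j, A i j * arcsin (S i j) := by
  set φ : ℝ → ℝ := fun t => ∑ i, ∑ j, A i j * (arcsin (t * S i j) - t * S i j)
  have hts : ∀ t ∈ Set.Ioo (0 : ℝ) 1, ∀ i j, |t * S i j| < 1 := fun t ht i j => by
    rw [abs_mul, abs_of_pos ht.1]
    exact (mul_le_of_le_one_right ht.1.le (hS.abs_apply_le_one hdiag i j)).trans_lt ht.2
  have hderiv : ∀ t ∈ Set.Ioo (0 : ℝ) 1, HasDerivAt φ
      (∑ i, ∑ j, A i j * (S i j * (1 / √(1 - (t * S i j) ^ 2) - 1))) t := fun t ht =>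
    HasDerivAt.fun_sum fun i _ => HasDerivAt.fun_sum fun j _ =>
      (hasDerivAt_arcsin_mul_sub (hts t ht i j)).const_mul (A i j)
  have hmono : MonotoneOn φ (Set.Icc 0 1) := by
    refine monotoneOn_of_deriv_nonneg (convex_Icc 0 1) (by fun_prop) ?_ ?_ <;> rw [interior_Icc]
    · exact fun t ht => (hderiv t ht).differentiableAt.differentiableWithinAt
    intro t ht
    rw [(hderiv t ht).deriv]
    set T := (t • S) ⊙ (t • S)
    have hT : T.PosSemidef := (hS.smul ht.1.le).hadamard (hS.smul ht.1.le)
    have hT_apply : ∀ i j, T i j = (t * S i j) ^ 2 := fun i j => by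
      simp only [T, hadamard_apply, smul_apply, smul_eq_mul, sq]
    have hT1 : ∀ i j, |T i j| < 1 := fun i j => by
      rw [hT_apply, abs_pow]
      exact pow_lt_one₀ (abs_nonneg _) (hts t ht i j) two_ne_zero
    have h := hA.sum_mul_nonneg (hS.hadamard (hT.map_one_div_sqrt_one_sub_sub_one hT1))
    simpa only [hadamard_apply, map_apply, hT_apply] using h
  have h01 := hmono ⟨le_rfl, zero_le_one⟩ ⟨zero_le_one, le_rfl⟩ zero_le_one
  simp only [φ, zero_mul, arcsin_zero, sub_zero, mul_zero, one_mul, Finset.sum_const_zero,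
    mul_sub, Finset.sum_sub_distrib] at h01
  linarith

end Matrix

/-- Nesterov's `2/π` theorem: if `A` and `Σ` are PSD and `Σ` has unit diagonal, then
`(2/π) ∑ A i j * arcsin (Σ i j) ≥ (2/π) ∑ A i j * Σ i j`. -/
theorem stmt_8 (n : ℕ) (A S : Matrix (Fin n) (Fin n) ℝ)
    (hA : A.PosSemidef) (hS : S.PosSemidef) (hdiag : ∀ i, S i i = 1) :
    (2 / π) * ∑ i, ∑ j, A i j * S i j ≤
      (2 / π) * ∑ i, ∑ j, A i j * arcsin (S i j) :=
  mul_le_mul_of_nonneg_left (hA.sum_mul_le_sum_mul_arcsin hS hdiag) (by positivity)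
end

section
/- For all x ∈ [-1, 1], |arcsin(x) - x| ≤ (π - 2)/2 · |x|³ ≤ (π-2)/2 · |x|. -/
/-!
Put `f x = x + c x³ - arcsin x` with `c = (π - 2)/2`, so that `f 0 = f 1 = 0`. Squaring shows
that `f'(x) = 1 + 3 c x² - 1/√(1 - x²)` has the sign of a quadratic in `x²` which is strictly
decreasing on `[0, ∞)`, positive at `0` and equal to `-1` at `1`. Hence `f` increases and then
decreases on `[0, 1]`, so it is nonnegative there. Oddness and `x ≤ arcsin x` on `[0, 1]` give
the bound with absolute values.
-/

open Real Set

lemma nonneg_of_hasDerivAt_nonneg_of_nonpos {f f' : ℝ → ℝ} {a b m x : ℝ}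
    (hf : ContinuousOn f (Icc a b)) (hderiv : ∀ y ∈ Ioo a b, HasDerivAt f (f' y) y)
    (hup : ∀ y ∈ Ioo a m, 0 ≤ f' y) (hdown : ∀ y ∈ Ioo m b, f' y ≤ 0)
    (ha : 0 ≤ f a) (hb : 0 ≤ f b) (hx : x ∈ Icc a b) : 0 ≤ f x := by
  rcases le_or_gt x m with hxm | hmx
  · have hmono : MonotoneOn f (Icc a x) := by
      refine monotoneOn_of_hasDerivWithinAt_nonneg (f' := f') (convex_Icc a x)
        (hf.mono (Icc_subset_Icc_right hx.2)) (fun y hy => ?_) (fun y hy => ?_) <;>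
        rw [interior_Icc] at hy
      · exact (hderiv y ⟨hy.1, hy.2.trans_le hx.2⟩).hasDerivWithinAt
      · exact hup y ⟨hy.1, hy.2.trans_le hxm⟩
    exact ha.trans (hmono (left_mem_Icc.2 hx.1) (right_mem_Icc.2 hx.1) hx.1)
  · have hanti : AntitoneOn f (Icc x b) := by
      refine antitoneOn_of_hasDerivWithinAt_nonpos (f' := f') (convex_Icc x b)
        (hf.mono (Icc_subset_Icc_left hx.1)) (fun y hy => ?_) (fun y hy => ?_) <;>
        rw [interior_Icc] at hy
      · exact (hderiv y ⟨hx.1.trans_lt hy.1, hy.2⟩).hasDerivWithinAt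
      · exact hdown y ⟨hmx.trans hy.1, hy.2⟩
    exact hb.trans (hanti (left_mem_Icc.2 hx.2) (right_mem_Icc.2 hx.2) hx.2)

/-- Defined by `(1 + 3 c u)² (1 - u) = 1 + u · arcsinCubicQuad c u`. -/
def arcsinCubicQuad (c u : ℝ) : ℝ :=
  -9 * c ^ 2 * u ^ 2 + (9 * c ^ 2 - 6 * c) * u + (6 * c - 1)

lemma strictAntiOn_arcsinCubicQuad {c : ℝ} (hc₀ : 0 < c) (hc : c ≤ 2 / 3) :
    StrictAntiOn (arcsinCubicQuad c) (Ici 0) := by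
  intro u hu v _ huv
  have hslope : 0 < 9 * c ^ 2 * (u + v) + 3 * c * (2 - 3 * c) := by
    have : 0 < u + v := by linarith [mem_Ici.1 hu]
    have : 0 ≤ 3 * c * (2 - 3 * c) := mul_nonneg (by positivity) (by linarith)
    positivity
  simp only [arcsinCubicQuad]
  nlinarith [mul_pos (sub_pos.2 huv) hslope]

lemma exists_arcsinCubicQuad_sq_eq_zero {c : ℝ} (hc : 1 / 6 < c) :
    ∃ a ∈ Ioo (0 : ℝ) 1, arcsinCubicQuad c (a ^ 2) = 0 := by
  have hcont : ContinuousOn (fun x : ℝ => arcsinCubicQuad c (x ^ 2)) (Icc 0 1) := by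
    unfold arcsinCubicQuad; fun_prop
  have hzero : (0 : ℝ) ∈ Ioo (arcsinCubicQuad c (1 ^ 2)) (arcsinCubicQuad c (0 ^ 2)) := by
    constructor <;> norm_num [arcsinCubicQuad] <;> linarith
  exact intermediate_value_Ioo' zero_le_one hcont hzero

lemma one_div_sqrt_lt_iff {c x : ℝ} (hc : 0 ≤ c) (hx : x ∈ Ioo (-1 : ℝ) 1) (hx₀ : x ≠ 0) :
    1 / √(1 - x ^ 2) < 1 + 3 * c * x ^ 2 ↔ 0 < arcsinCubicQuad c (x ^ 2) := by
  have hx2 : 0 < x ^ 2 := by positivity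
  have hs : 0 < √(1 - x ^ 2) := sqrt_pos.2 (by nlinarith [hx.1, hx.2])
  have hs2 : √(1 - x ^ 2) ^ 2 = 1 - x ^ 2 := sq_sqrt (by nlinarith [hx.1, hx.2])
  have hsquare : ((1 + 3 * c * x ^ 2) * √(1 - x ^ 2)) ^ 2 = 1 + x ^ 2 * arcsinCubicQuad c (x ^ 2) := by
    rw [mul_pow, hs2, arcsinCubicQuad]; ring
  rw [div_lt_iff₀ hs, ← one_lt_sq_iff₀ (by positivity), hsquare, lt_add_iff_pos_right,
    mul_pos_iff_of_pos_left hx2]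

lemma hasDerivAt_add_mul_pow_three_sub_arcsin (c : ℝ) {x : ℝ} (hx : x ∈ Ioo (-1 : ℝ) 1) :
    HasDerivAt (fun y => y + c * y ^ 3 - arcsin y) (1 + 3 * c * x ^ 2 - 1 / √(1 - x ^ 2)) x := by
  refine (((hasDerivAt_id' x).add ((hasDerivAt_pow 3 x).const_mul c)).sub
    (hasDerivAt_arcsin hx.1.ne' hx.2.ne)).congr_deriv ?_
  norm_num
  ring

lemma arcsin_sub_self_le {x : ℝ} (hx : x ∈ Icc (0 : ℝ) 1) : arcsin x - x ≤ (π - 2) / 2 * x ^ 3 := by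
  have hc : 1 / 6 < (π - 2) / 2 := by linarith [pi_gt_three]
  have hc' : (π - 2) / 2 ≤ 2 / 3 := by linarith [pi_lt_d2]
  set c := (π - 2) / 2
  obtain ⟨a, ha, hQa⟩ := exists_arcsinCubicQuad_sq_eq_zero hc
  have hanti := strictAntiOn_arcsinCubicQuad (by linarith) hc'
  suffices 0 ≤ x + c * x ^ 3 - arcsin x by linarith
  refine nonneg_of_hasDerivAt_nonneg_of_nonpos (f := fun y => y + c * y ^ 3 - arcsin y) (m := a)
    (by fun_prop) (fun y hy => hasDerivAt_add_mul_pow_three_sub_arcsin c ⟨by linarith [hy.1], hy.2⟩)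
    (fun y hy => ?_) (fun y hy => ?_) (by simp) (by simp [c]; linarith) hx
  · have hQ : 0 < arcsinCubicQuad c (y ^ 2) :=
      hQa ▸ hanti (sq_nonneg y) (sq_nonneg a) (pow_lt_pow_left₀ hy.2 hy.1.le two_ne_zero)
    have := (one_div_sqrt_lt_iff (by linarith) ⟨by linarith [hy.1], hy.2.trans ha.2⟩
      hy.1.ne').2 hQ
    linarith
  · have hy₀ : 0 < y := ha.1.trans hy.1
    have hQ : arcsinCubicQuad c (y ^ 2) < 0 :=
      hQa ▸ hanti (sq_nonneg a) (sq_nonneg y) (pow_lt_pow_left₀ hy.1 ha.1.le two_ne_zero)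
    have := (one_div_sqrt_lt_iff (by linarith) ⟨by linarith, hy.2⟩ hy₀.ne').not.2 hQ.not_gt
    linarith [not_lt.1 this]

lemma self_le_arcsin {x : ℝ} (hx : x ∈ Icc (0 : ℝ) 1) : x ≤ arcsin x := by
  simpa [sin_arcsin (by linarith [hx.1]) hx.2] using sin_le (arcsin_nonneg.2 hx.1)

lemma abs_arcsin_sub_self_le {x : ℝ} (hx : x ∈ Icc (-1 : ℝ) 1) :
    |arcsin x - x| ≤ (π - 2) / 2 * |x| ^ 3 := by
  have hnonneg {y : ℝ} (hy : y ∈ Icc (0 : ℝ) 1) : |arcsin y - y| ≤ (π - 2) / 2 * |y| ^ 3 := by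
    rw [abs_of_nonneg (sub_nonneg.2 (self_le_arcsin hy)), abs_of_nonneg hy.1]
    exact arcsin_sub_self_le hy
  rcases le_total 0 x with h | h
  · exact hnonneg ⟨h, hx.2⟩
  · have := hnonneg (y := -x) ⟨by linarith, by linarith [hx.1]⟩
    rwa [arcsin_neg, abs_neg, ← neg_sub', abs_neg] at this

/-- For all `x ∈ [-1,1]`, `|arcsin x - x| ≤ ((π-2)/2)|x|³ ≤ ((π-2)/2)|x|`. -/
theorem stmt_9 :
    ∀ x ∈ Set.Icc (-1 : ℝ) 1,
      |arcsin x - x| ≤ (π - 2) / 2 * |x| ^ 3 ∧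
        (π - 2) / 2 * |x| ^ 3 ≤ (π - 2) / 2 * |x| := by
  intro x hx
  have hc : 0 ≤ (π - 2) / 2 := by linarith [pi_gt_three]
  refine ⟨abs_arcsin_sub_self_le hx, mul_le_mul_of_nonneg_left ?_ hc⟩
  simpa using pow_le_pow_of_le_one (abs_nonneg x) (abs_le.2 hx) (by norm_num : 1 ≤ 3)
end

section
/- Let ε ∈ (0, 0.689], E finite, σ: E → [-1,1] with (1/|E|)Σ_e |σ(e)| ≤ ε². Then the ratio [(1/π)Σ_e arccos(σ(e))] / [(1/2)Σ_e (1 - σ(e))] is at least ε·α_GW + (1-ε)·g(-ε), where g(x) = 2arccos(x)/(π(1-x)) and α_GW = 0.878 (any valid lower bound for g on [-1,1)). -/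
/-!
Instead of splitting the edges by Markov's inequality, use weak duality. Writing `C` for the
claimed ratio, it suffices that every `x ∈ [-1, 1]` satisfies
`C (1 - x) / 2 ≤ arccos x / π + λ (|x| - ε²)` with `λ = (1 - ε) / 5`: summed over the edges,
the penalty term is nonpositive because `∑ |σ e| ≤ ε² |E|`. This pointwise inequality is checked
on four ranges of `x`, bounding `arccos x / π` from below by a polynomial via
`t + 0.13 t³ ≤ arcsin t ≤ t + 0.23 t³` (for `x ≤ -0.6` after the half-angle substitution
`x = 2 w² - 1`), and `C` from above by the same arcsine bound at `ε`; what remains are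
polynomial inequalities in `x` and `ε`.
-/

open Real Finset

lemma arcsin_le_add_mul_cube {t : ℝ} (ht₀ : 0 ≤ t) (ht₁ : t ≤ 0.689) :
    arcsin t ≤ t + 0.23 * t ^ 3 := by
  obtain ⟨u, hu_def⟩ : ∃ u, u = t + 0.23 * t ^ 3 := ⟨_, rfl⟩
  have hu₀ : 0 ≤ u := by rw [hu_def]; positivity
  have hu : u ≤ π / 2 := by nlinarith [pi_gt_three, pow_le_pow_left₀ ht₀ ht₁ 3]
  have hsin : t ≤ sin u := by
    have ht2 : t ^ 2 ≤ 0.4748 := by nlinarith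
    have hk : (1 + 0.23 * t ^ 2) ^ 3 ≤ 1.38 := by
      have h1 : 1 + 0.23 * t ^ 2 ≤ 1.11 := by linarith
      calc (1 + 0.23 * t ^ 2) ^ 3 ≤ 1.11 ^ 3 := pow_le_pow_left₀ (by positivity) h1 3
        _ ≤ 1.38 := by norm_num
    have hu3 : u ^ 3 = t ^ 3 * (1 + 0.23 * t ^ 2) ^ 3 := by rw [hu_def]; ring
    have : u ^ 3 ≤ 1.38 * t ^ 3 := by
      rw [hu3, mul_comm]; exact mul_le_mul_of_nonneg_right hk (pow_nonneg ht₀ 3)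
    linarith [sin_ge_sub_cube hu₀]
  calc arcsin t ≤ arcsin (sin u) := arcsin_le_arcsin hsin
    _ = u := arcsin_sin (by linarith [pi_pos]) hu
    _ = _ := hu_def

lemma add_mul_cube_le_arcsin {t : ℝ} (ht₀ : 0 ≤ t) (ht₁ : t ≤ 0.6) :
    t + 0.13 * t ^ 3 ≤ arcsin t := by
  obtain ⟨u, hu_def⟩ : ∃ u, u = t + 0.13 * t ^ 3 := ⟨_, rfl⟩
  have hu₀ : 0 ≤ u := by rw [hu_def]; positivity
  have hu1 : u ≤ 0.63 := by nlinarith [pow_le_pow_left₀ ht₀ ht₁ 3]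
  have htu : t ^ 3 ≤ u ^ 3 := pow_le_pow_left₀ ht₀ (by nlinarith [pow_nonneg ht₀ 3]) 3
  have hsin : sin u ≤ t := by
    have h := (abs_le.mp (sin_bound (x := u) (by rw [abs_of_nonneg hu₀]; linarith))).2
    rw [abs_of_nonneg hu₀] at h
    have hu5 : u ^ 5 ≤ 0.4 * u ^ 3 := by
      rw [show u ^ 5 = u ^ 2 * u ^ 3 by ring]
      exact mul_le_mul_of_nonneg_right (by nlinarith) (pow_nonneg hu₀ 3)
    linarith [pow_nonneg ht₀ 3]
  rw [← hu_def]
  calc u = arcsin (sin u) := (arcsin_sin (by linarith [pi_pos]) (by linarith [pi_gt_three])).symm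
    _ ≤ arcsin t := arcsin_le_arcsin hsin

lemma arccos_two_mul_sq_sub_one {w : ℝ} (hw₀ : 0 ≤ w) (hw₁ : w ≤ 1) :
    arccos (2 * w ^ 2 - 1) = 2 * arccos w := by
  conv_lhs => rw [← cos_arccos (by linarith) hw₁, ← cos_two_mul]
  exact arccos_cos (by linarith [arccos_nonneg w]) (by linarith [arccos_le_pi_div_two.mpr hw₀])

lemma one_sub_div_two_le_arccos_div_pi {x : ℝ} (hx₁ : 1 / 5 ≤ x) (hx₂ : x ≤ 1) :
    (1 - x) / 2 ≤ arccos x / π := by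
  set s := √(2 * (1 - x))
  have hs0 : 0 ≤ s := sqrt_nonneg _
  have hs2 : s ^ 2 = 2 * (1 - x) := sq_sqrt (by linarith)
  have hs : s ≤ arccos x := by
    have h := one_sub_sq_div_two_le_cos (x := arccos x)
    rw [cos_arccos (by linarith) hx₂] at h
    exact sqrt_le_iff.mpr ⟨arccos_nonneg x, by linarith⟩
  have hs1 : s ≤ 1.265 := by nlinarith
  rw [le_div_iff₀ pi_pos]
  nlinarith [pi_lt_d6, mul_nonneg hs0 (by linarith : (0:ℝ) ≤ 1.265 - s)]

/-- `(1 + ε)` times an upper bound for `ε · 0.878 + (1 - ε) g(-ε)`, from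
`arcsin ε ≤ ε + 0.23 ε³` and `2 / π ≤ 0.6366204`. -/
noncomputable def ratioBound (ε : ℝ) : ℝ :=
  ε * 0.878 * (1 + ε) + (1 - ε) * (1 + 0.6366204 * (ε + 0.23 * ε ^ 3))

lemma noisy_ratio_mul_le_ratioBound {ε : ℝ} (hε0 : 0 ≤ ε) (hε : ε ≤ 0.689) :
    (ε * 0.878 + (1 - ε) * (2 * arccos (-ε) / (π * (1 + ε)))) * (1 + ε) ≤ ratioBound ε := by
  have hA : 0 ≤ ε + 0.23 * ε ^ 3 := by positivity
  have hg : 2 * arccos (-ε) / π ≤ 1 + 0.6366204 * (ε + 0.23 * ε ^ 3) := by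
    rw [arccos_neg, arccos_eq_pi_div_two_sub_arcsin, div_le_iff₀ pi_pos]
    nlinarith [arcsin_le_add_mul_cube hε0 hε, pi_gt_d6]
  have hsplit : (ε * 0.878 + (1 - ε) * (2 * arccos (-ε) / (π * (1 + ε)))) * (1 + ε)
      = ε * 0.878 * (1 + ε) + (1 - ε) * (2 * arccos (-ε) / π) := by
    field_simp
  rw [hsplit, ratioBound]
  nlinarith [mul_le_mul_of_nonneg_left hg (by linarith : (0:ℝ) ≤ 1 - ε)]

lemma le_of_mul_le_of_mul_le {c k P d R : ℝ} (hk : 0 < k) (hd : 0 ≤ d) (hc : c * k ≤ P)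
    (h : P * d ≤ R * k) : c * d ≤ R :=
  le_of_mul_le_mul_right (by nlinarith) hk

section EdgeBound

variable {c ε : ℝ}

lemma edge_bound_of_large_pos (hc : c * (1 + ε) ≤ ratioBound ε) (hε0 : 0 ≤ ε) (hε : ε ≤ 0.689)
    {x : ℝ} (hx₁ : 0.48 ≤ x) (hx₂ : x ≤ 1) :
    c * ((1 - x) / 2) ≤ arccos x / π + (1 - ε) / 5 * (|x| - ε ^ 2) := by
  have hc1 : c ≤ 1 := by
    refine le_of_mul_le_mul_right (hc.trans ?_) (by linarith : (0:ℝ) < 1 + ε)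
    rw [ratioBound]
    nlinarith [pow_nonneg hε0 3,
      mul_nonneg (mul_nonneg hε0 hε0) (by linarith : (0:ℝ) ≤ 0.689 - ε)]
  have hpen : 0 ≤ (1 - ε) / 5 * (|x| - ε ^ 2) := by
    rw [abs_of_nonneg (by linarith)]
    exact mul_nonneg (by linarith) (by nlinarith)
  nlinarith [one_sub_div_two_le_arccos_div_pi (by linarith : (1:ℝ) / 5 ≤ x) hx₂]

lemma edge_bound_of_small_nonneg (hc : c * (1 + ε) ≤ ratioBound ε) (hε0 : 0 ≤ ε)
    (hε : ε ≤ 0.689) {x : ℝ} (hx₁ : 0 ≤ x) (hx₂ : x ≤ 0.48) :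
    c * ((1 - x) / 2) ≤ arccos x / π + (1 - ε) / 5 * (|x| - ε ^ 2) := by
  have hA : 0 ≤ x + 0.23 * x ^ 3 := by positivity
  have harccos : 1 / 2 - 0.3183102 * (x + 0.23 * x ^ 3) ≤ arccos x / π := by
    rw [arccos_eq_pi_div_two_sub_arcsin, le_div_iff₀ pi_pos]
    nlinarith [arcsin_le_add_mul_cube hx₁ (by linarith),
      mul_nonneg hA (by linarith [pi_gt_d6] : (0:ℝ) ≤ 0.3183102 * π - 1)]
  have hpoly : ratioBound ε * ((1 - x) / 2)
      ≤ (1 / 2 - 0.3183102 * (x + 0.23 * x ^ 3) + (1 - ε) / 5 * (x - ε ^ 2)) * (1 + ε) := by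
    rw [ratioBound]
    nlinarith [mul_nonneg (mul_nonneg hε0 hε0) (by linarith : (0:ℝ) ≤ 0.48 - x),
      mul_nonneg hx₁ (by linarith : (0:ℝ) ≤ 0.689 - ε),
      mul_nonneg (mul_nonneg hx₁ hx₁) (by linarith : (0:ℝ) ≤ 0.689 - ε),
      sq_nonneg (x - ε), mul_nonneg hx₁ hε0, pow_nonneg hε0 3, pow_nonneg hx₁ 3,
      mul_nonneg hε0 (by linarith : (0:ℝ) ≤ 0.48 - x),
      mul_nonneg (mul_nonneg hx₁ hx₁) hx₁, mul_nonneg (mul_nonneg hε0 hε0) hε0]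
  have := le_of_mul_le_of_mul_le (by linarith) (by linarith) hc hpoly
  rw [abs_of_nonneg hx₁]
  linarith

lemma edge_bound_of_small_neg (hc : c * (1 + ε) ≤ ratioBound ε) (hε0 : 0 ≤ ε)
    (hε : ε ≤ 0.689) {x : ℝ} (hx₁ : -0.6 ≤ x) (hx₂ : x ≤ 0) :
    c * ((1 - x) / 2) ≤ arccos x / π + (1 - ε) / 5 * (|x| - ε ^ 2) := by
  obtain ⟨t, rfl⟩ : ∃ t, x = -t := ⟨-x, (neg_neg x).symm⟩
  have ht₁ : 0 ≤ t := by linarith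
  have ht₂ : t ≤ 0.6 := by linarith
  have hA : 0 ≤ t + 0.13 * t ^ 3 := by positivity
  have harccos : 1 / 2 + 0.3183085 * (t + 0.13 * t ^ 3) ≤ arccos (-t) / π := by
    rw [arccos_neg, arccos_eq_pi_div_two_sub_arcsin, le_div_iff₀ pi_pos]
    nlinarith [add_mul_cube_le_arcsin ht₁ ht₂,
      mul_nonneg hA (by linarith [pi_lt_d6] : (0:ℝ) ≤ 1 - 0.3183085 * π)]
  have hpoly : ratioBound ε * ((1 - -t) / 2)
      ≤ (1 / 2 + 0.3183085 * (t + 0.13 * t ^ 3) + (1 - ε) / 5 * (t - ε ^ 2)) * (1 + ε) := by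
    have hts : (0:ℝ) ≤ 0.6 - t := by linarith
    have hεs : (0:ℝ) ≤ 0.689 - ε := by linarith
    rw [ratioBound]
    linarith [mul_nonneg hε0 hεs, mul_nonneg (mul_nonneg hε0 hεs) hεs,
      mul_nonneg (mul_nonneg (mul_nonneg hε0 hε0) hεs) hεs,
      mul_nonneg hts (mul_nonneg hε0 hε0),
      mul_nonneg hts (mul_nonneg (mul_nonneg hε0 hε0) hε0),
      mul_nonneg (mul_nonneg hts (mul_nonneg (mul_nonneg hε0 hε0) hε0)) hεs,
      mul_nonneg (mul_nonneg hts hts) hε0,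
      mul_nonneg ht₁ hεs, mul_nonneg (mul_nonneg ht₁ hε0) hεs,
      mul_nonneg ht₁ (mul_nonneg hts hts), mul_nonneg (mul_nonneg ht₁ (mul_nonneg hts hts)) hε0,
      mul_nonneg ht₁ ht₁, mul_nonneg (mul_nonneg ht₁ ht₁) hεs]
  have := le_of_mul_le_of_mul_le (by linarith) (by linarith) hc hpoly
  rw [abs_neg, abs_of_nonneg ht₁]
  linarith

lemma edge_bound_of_large_neg (hc : c * (1 + ε) ≤ ratioBound ε) (hε0 : 0 ≤ ε)
    (hε : ε ≤ 0.689) {x : ℝ} (hx₁ : -1 ≤ x) (hx₂ : x ≤ -0.6) :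
    c * ((1 - x) / 2) ≤ arccos x / π + (1 - ε) / 5 * (|x| - ε ^ 2) := by
  obtain ⟨w, hw₀, hw₁, rfl⟩ : ∃ w, 0 ≤ w ∧ w ≤ 0.4473 ∧ x = 2 * w ^ 2 - 1 := by
    refine ⟨√((1 + x) / 2), sqrt_nonneg _, ?_, by rw [sq_sqrt (by linarith)]; ring⟩
    rw [sqrt_le_left (by norm_num)]
    linarith
  have hA : 0 ≤ w + 0.23 * w ^ 3 := by positivity
  have harccos : 1 - 0.6366204 * (w + 0.23 * w ^ 3) ≤ arccos (2 * w ^ 2 - 1) / π := by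
    rw [arccos_two_mul_sq_sub_one hw₀ (by linarith), arccos_eq_pi_div_two_sub_arcsin,
      le_div_iff₀ pi_pos]
    nlinarith [arcsin_le_add_mul_cube hw₀ (by linarith),
      mul_nonneg hA (by linarith [pi_gt_d6] : (0:ℝ) ≤ 0.6366204 * π - 2)]
  have hpoly : ratioBound ε * ((1 - (2 * w ^ 2 - 1)) / 2)
      ≤ (1 - 0.6366204 * (w + 0.23 * w ^ 3) + (1 - ε) / 5 * (-(2 * w ^ 2 - 1) - ε ^ 2))
        * (1 + ε) := by
    have hws : (0:ℝ) ≤ 0.4473 - w := by linarith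
    have hεs : (0:ℝ) ≤ 0.689 - ε := by linarith
    rw [ratioBound]
    linarith [hεs, mul_nonneg (mul_nonneg hε0 hεs) hεs, mul_nonneg hε0 hεs,
      mul_nonneg (mul_nonneg (mul_nonneg hε0 hε0) hεs) hεs,
      hws, mul_nonneg hws hεs,
      mul_nonneg hws (mul_nonneg (mul_nonneg hεs hεs) (mul_nonneg hεs hεs)),
      mul_nonneg (mul_nonneg hws hε0) hεs,
      mul_nonneg (mul_nonneg hws hε0) (mul_nonneg hεs hεs),
      mul_nonneg hws hws, mul_nonneg (mul_nonneg hws hws) (mul_nonneg hεs hεs),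
      mul_nonneg (mul_nonneg hws hws) (mul_nonneg (mul_nonneg hεs hεs) hεs),
      mul_nonneg (mul_nonneg hws hws) hε0,
      mul_nonneg (mul_nonneg (mul_nonneg hws hws) hε0) (mul_nonneg (mul_nonneg hεs hεs) hεs),
      mul_nonneg (mul_nonneg hws hws) hws,
      mul_nonneg (mul_nonneg (mul_nonneg hws hws) hws) hε0]
  have := le_of_mul_le_of_mul_le (by linarith) (by nlinarith) hc hpoly
  rw [abs_of_neg (by linarith)]
  linarith

lemma edge_bound (hc : c * (1 + ε) ≤ ratioBound ε) (hε0 : 0 ≤ ε) (hε : ε ≤ 0.689) {x : ℝ}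
    (hx : x ∈ Set.Icc (-1 : ℝ) 1) :
    c * ((1 - x) / 2) ≤ arccos x / π + (1 - ε) / 5 * (|x| - ε ^ 2) := by
  obtain ⟨hx₁, hx₂⟩ := hx
  rcases le_total 0.48 x with h | h
  · exact edge_bound_of_large_pos hc hε0 hε h hx₂
  rcases le_total 0 x with h' | h'
  · exact edge_bound_of_small_nonneg hc hε0 hε h' h
  rcases le_total (-0.6) x with h'' | h''
  · exact edge_bound_of_small_neg hc hε0 hε h'' h'
  · exact edge_bound_of_large_neg hc hε0 hε hx₁ h''

end EdgeBound

lemma Finset.sum_le_sum_of_le_add_mul_sub {ι : Type*} (E : Finset ι) {u v a : ι → ℝ}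
    {l b : ℝ} (hl : 0 ≤ l) (h : ∀ e ∈ E, u e ≤ v e + l * (a e - b))
    (ha : ∑ e ∈ E, a e ≤ #E * b) :
    ∑ e ∈ E, u e ≤ ∑ e ∈ E, v e := by
  calc ∑ e ∈ E, u e ≤ ∑ e ∈ E, (v e + l * (a e - b)) := sum_le_sum h
    _ = ∑ e ∈ E, v e + l * (∑ e ∈ E, a e - #E * b) := by
      rw [sum_add_distrib, ← mul_sum, sum_sub_distrib, sum_const, nsmul_eq_mul]
    _ ≤ ∑ e ∈ E, v e := by nlinarith

/-- Uniform-weight noisy Max-Cut bound: if the average of `|σ|` over the edge set is at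
most `ε²` with `0 < ε ≤ 0.689`, then the rounded cut `(1/π) ∑ arccos σ` is at least
`(ε α_GW + (1-ε) g(-ε))` times the measured cut `(1/2) ∑ (1 - σ)`, with
`α_GW = 0.878` and `g(x) = 2 arccos x / (π (1 - x))`. -/
theorem stmt_15 (ι : Type*) (E : Finset ι) (σ : ι → ℝ)
    (hσ : ∀ e ∈ E, σ e ∈ Set.Icc (-1 : ℝ) 1)
    (ε : ℝ) (hε0 : 0 < ε) (hε : ε ≤ 0.689)
    (havg : (1 / (E.card : ℝ)) * ∑ e ∈ E, |σ e| ≤ ε ^ 2) :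
    (ε * 0.878 + (1 - ε) * (2 * arccos (-ε) / (π * (1 + ε)))) *
        ((1 / 2) * ∑ e ∈ E, (1 - σ e)) ≤
      (1 / π) * ∑ e ∈ E, arccos (σ e) := by
  have hsum : ∑ e ∈ E, |σ e| ≤ #E * ε ^ 2 := by
    rcases E.eq_empty_or_nonempty with rfl | hE
    · simp
    rwa [one_div_mul_eq_div, div_le_iff₀' (by exact_mod_cast hE.card_pos)] at havg
  rw [mul_sum, mul_sum, mul_sum]
  refine sum_le_sum_of_le_add_mul_sub E (by linarith : (0:ℝ) ≤ (1 - ε) / 5) (fun e he => ?_) hsum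
  convert edge_bound (noisy_ratio_mul_le_ratioBound hε0.le hε) hε0.le hε (hσ e he) using 1 <;> ring
end

section
/- Let Σ be an n×n symmetric matrix with unit diagonal and suppose Σ_{j≠i} |Σ_{ij}| ≤ S for every i. Fix α ∈ (2/π, 1]. If S ≤ (1-α)/(α - (4-π)/π), then the matrix M with M_{ii} = 1 - α and M_{ij} = (2/π)arcsin(Σ_{ij}) - α Σ_{ij} for i ≠ j is positive semidefinite. Consequently, for any PSD matrix A, (2/π) Σ_{ij} A_{ij} arcsin(Σ_{ij}) ≥ α Σ_{ij} A_{ij} Σ_{ij}. -/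
/-!
Write `f x = (2/π) arcsin x - α x` and `c = α - (4 - π)/π`. On `[0, 1]`, `sin y ≤ y` and Jordan's
inequality give `(2/π) x ≤ (2/π) arcsin x ≤ x`, hence `|f x| ≤ c |x|` on `[-1, 1]` by oddness.
So the off-diagonal row sums of `M` are at most `c B ≤ 1 - α`, and Gershgorin's circle theorem
makes the symmetric matrix `M` positive semidefinite. Since `S` has unit diagonal and
`f 1 = 1 - α`, `M` is `f` applied entrywise to `S`; the second claim is then
`∑ i j, A i j * M i j ≥ 0`, which is `1ᵀ (A ⊙ M) 1 ≥ 0` for the Hadamard product `A ⊙ M`,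
positive semidefinite by the Schur product theorem.
-/

open Real Matrix Finset

namespace Real

theorem self_le_arcsin {x : ℝ} (h₀ : 0 ≤ x) (h₁ : x ≤ 1) : x ≤ arcsin x := by
  calc x = sin (arcsin x) := (sin_arcsin (by linarith) h₁).symm
    _ ≤ arcsin x := sin_le (arcsin_nonneg.2 h₀)

theorem two_div_pi_mul_arcsin_le_self {x : ℝ} (h₀ : 0 ≤ x) (h₁ : x ≤ 1) :
    2 / π * arcsin x ≤ x := by
  calc 2 / π * arcsin x ≤ sin (arcsin x) :=
        mul_le_sin (arcsin_nonneg.2 h₀) (arcsin_le_pi_div_two x)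
    _ = x := sin_arcsin (by linarith) h₁

theorem abs_two_div_pi_mul_arcsin_sub_le_of_nonneg {α x : ℝ} (hα : 2 / π ≤ α)
    (h₀ : 0 ≤ x) (h₁ : x ≤ 1) :
    |2 / π * arcsin x - α * x| ≤ (α - (4 - π) / π) * x := by
  have hπ : 0 < π := pi_pos
  have hlow : 2 / π * x ≤ 2 / π * arcsin x :=
    mul_le_mul_of_nonneg_left (self_le_arcsin h₀ h₁) (by positivity)
  have hupp := two_div_pi_mul_arcsin_le_self h₀ h₁
  have hπ2 : 2 / π ≤ 1 := (div_le_one hπ).2 two_le_pi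
  have hsplit : (4 - π) / π = 2 * (2 / π) - 1 := by field_simp; ring
  rw [abs_le, hsplit]
  constructor <;> nlinarith

theorem abs_two_div_pi_mul_arcsin_sub_le {α x : ℝ} (hα : 2 / π ≤ α) (hx : |x| ≤ 1) :
    |2 / π * arcsin x - α * x| ≤ (α - (4 - π) / π) * |x| := by
  rcases le_total 0 x with h | h
  · rw [abs_of_nonneg h] at hx ⊢
    exact abs_two_div_pi_mul_arcsin_sub_le_of_nonneg hα h hx
  · rw [abs_of_nonpos h] at hx ⊢
    have := abs_two_div_pi_mul_arcsin_sub_le_of_nonneg hα (neg_nonneg.2 h) hx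
    rwa [arcsin_neg, ← abs_neg, show -(2 / π * -arcsin x - α * -x) = 2 / π * arcsin x - α * x by
      ring] at this

end Real

namespace Matrix

open scoped ComplexOrder

variable {ι : Type*} [Fintype ι]

theorem IsHermitian.posSemidef_of_sum_row_le_diag [DecidableEq ι] {M : Matrix ι ι ℝ}
    (hM : M.IsHermitian) (h : ∀ i, ∑ j ∈ univ.erase i, |M i j| ≤ M i i) : M.PosSemidef := by
  refine hM.posSemidef_iff_eigenvalues_nonneg.2 fun k => show 0 ≤ hM.eigenvalues k from ?_
  have hμ : Module.End.HasEigenvalue (toLin' M) (hM.eigenvalues k) := by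
    rw [Module.End.hasEigenvalue_iff_mem_spectrum, spectrum_toLin']
    exact hM.eigenvalues_mem_spectrum_real k
  obtain ⟨i, hi⟩ := eigenvalue_mem_ball hμ
  rw [Metric.mem_closedBall, Real.dist_eq] at hi
  simp only [Real.norm_eq_abs] at hi
  linarith [(abs_le.1 hi).1, h i]

theorem PosSemidef.sum_hadamard_nonneg {𝕜 : Type*} [RCLike 𝕜] {A B : Matrix ι ι 𝕜}
    (hA : A.PosSemidef) (hB : B.PosSemidef) : 0 ≤ ∑ i, ∑ j, A i j * B i j := by
  simpa [dotProduct, mulVec] using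
    (hA.hadamard hB).dotProduct_mulVec_nonneg 1

end Matrix

theorem stmt_17_general (n : ℕ) (S : Matrix (Fin n) (Fin n) ℝ) (hsym : S.IsHermitian)
    (hdiag : ∀ i, S i i = 1) (hentry : ∀ i j, |S i j| ≤ 1)
    (α : ℝ) (hα1 : 2 / π < α)
    (B : ℝ) (hrow : ∀ i, ∑ j ∈ Finset.univ.erase i, |S i j| ≤ B)
    (hB : B ≤ (1 - α) / (α - (4 - π) / π)) :
    (Matrix.of fun i j =>
        if i = j then 1 - α else (2 / π) * arcsin (S i j) - α * S i j).PosSemidef ∧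
      ∀ A : Matrix (Fin n) (Fin n) ℝ, A.PosSemidef →
        α * ∑ i, ∑ j, A i j * S i j ≤ (2 / π) * ∑ i, ∑ j, A i j * arcsin (S i j) := by
  set M : Matrix (Fin n) (Fin n) ℝ :=
    of fun i j => if i = j then 1 - α else 2 / π * arcsin (S i j) - α * S i j
  have hc : 0 < α - (4 - π) / π := by
    have : (4 - π) / π < 2 / π := div_lt_div_of_pos_right (by linarith [pi_gt_three]) pi_pos
    linarith
  have hM_apply : ∀ i j, M i j = 2 / π * arcsin (S i j) - α * S i j := by
    intro i j
    by_cases h : i = j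
    · subst h
      simp only [M, of_apply, if_pos, hdiag, arcsin_one]
      field_simp
    · simp only [M, of_apply, if_neg h]
  have hMpsd : M.PosSemidef := by
    refine IsHermitian.posSemidef_of_sum_row_le_diag (IsHermitian.ext fun i j => ?_) fun i => ?_
    · simp only [M, of_apply, star_trivial, eq_comm (a := j), ← hsym.apply i j]
    calc ∑ j ∈ univ.erase i, |M i j|
        ≤ ∑ j ∈ univ.erase i, (α - (4 - π) / π) * |S i j| := sum_le_sum fun j _ =>
          hM_apply i j ▸ abs_two_div_pi_mul_arcsin_sub_le hα1.le (hentry i j)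
      _ ≤ (α - (4 - π) / π) * B := by
          rw [← mul_sum]
          exact mul_le_mul_of_nonneg_left (hrow i) hc.le
      _ ≤ 1 - α := (le_div_iff₀' hc).1 hB
      _ = M i i := by simp [M]
  refine ⟨hMpsd, fun A hA => ?_⟩
  have key := hA.sum_hadamard_nonneg hMpsd
  simp only [hM_apply, mul_sub, sum_sub_distrib, mul_sum, mul_left_comm (A _ _)] at key ⊢
  linarith

/-- Noisy QUBO Gershgorin lemma: if `Σ` is symmetric with unit diagonal, entries in
`[-1,1]`, and off-diagonal absolute row sums at most `B ≤ (1-α)/(α - (4-π)/π)` for some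
`α ∈ (2/π, 1]`, then `M` with `M i i = 1 - α`, `M i j = (2/π) arcsin (Σ i j) - α Σ i j`
is PSD; consequently, for every PSD `A`,
`(2/π) ∑ A i j arcsin (Σ i j) ≥ α ∑ A i j Σ i j`. -/
theorem stmt_17 (n : ℕ) (S : Matrix (Fin n) (Fin n) ℝ) (hsym : S.IsHermitian)
    (hdiag : ∀ i, S i i = 1) (hentry : ∀ i j, |S i j| ≤ 1)
    (α : ℝ) (hα1 : 2 / π < α) (hα2 : α ≤ 1)
    (B : ℝ) (hrow : ∀ i, ∑ j ∈ Finset.univ.erase i, |S i j| ≤ B)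
    (hB : B ≤ (1 - α) / (α - (4 - π) / π)) :
    (Matrix.of fun i j =>
        if i = j then 1 - α else (2 / π) * arcsin (S i j) - α * S i j).PosSemidef ∧
      ∀ A : Matrix (Fin n) (Fin n) ℝ, A.PosSemidef →
        α * ∑ i, ∑ j, A i j * S i j ≤ (2 / π) * ∑ i, ∑ j, A i j * arcsin (S i j) :=
  stmt_17_general n S hsym hdiag hentry α hα1 B hrow hB
end
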